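/- arXiv:2106.01823 — 3 statements merged into one kernel-verified Lean document; each statement's English description precedes it below -/
import Mathlib

section
/- The family of functionals E_ε Γ-converges (with respect to narrow convergence on probability measures with finite second moment) as ε → 0 to E, where E(ρ) equals the interaction energy if ρ is supported in M and +∞ otherwise. The recovery sequence may be taken constant: ρ_ε = ρ. -/
open Metric MeasureTheory Filter Topology

noncomputable section

variable {d : ℕ}

local notation "Ed" => EuclideanSpace ℝ (Fin d)

namespace Stmt4Aux

lemma integrable_of_bdd {μ : Measure Ed} [IsProbabilityMeasure μ]
    {f : Ed → ℝ} (hf : Continuous f) {B : ℝ} (hb : ∀ x, |f x| ≤ B) :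
    Integrable f μ :=
  Integrable.mono' (integrable_const B) hf.aestronglyMeasurable
    (Filter.Eventually.of_forall fun x => by rw [Real.norm_eq_abs]; exact hb x)

lemma growth_C_nonneg {W : Ed → ℝ} (hW0 : ∀ x, 0 ≤ W x)
    {C : ℝ} (hC : ∀ x, W x ≤ C * (1 + ‖x‖ ^ 2)) : 0 ≤ C := by
  have h := hC 0
  have h0 := hW0 0
  simp only [norm_zero] at h
  nlinarith

lemma integrable_slice {μ : Measure Ed} [IsProbabilityMeasure μ]
    (h2 : Integrable (fun x => ‖x‖ ^ 2) μ)
    {W : Ed → ℝ} (hWc : Continuous W) (hW0 : ∀ x, 0 ≤ W x)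
    {C : ℝ} (hC : ∀ x, W x ≤ C * (1 + ‖x‖ ^ 2)) (x : Ed) :
    Integrable (fun y => W (x - y)) μ := by
  have hC0 : 0 ≤ C := growth_C_nonneg hW0 hC
  refine Integrable.mono' (g := fun y => C * (1 + 2 * ‖x‖ ^ 2) + (2 * C) * ‖y‖ ^ 2)
    ((integrable_const _).add (h2.const_mul _))
    ((hWc.comp (continuous_const.sub continuous_id)).aestronglyMeasurable)
    (Filter.Eventually.of_forall fun y => ?_)
  have h1 : ‖x - y‖ ≤ ‖x‖ + ‖y‖ := norm_sub_le _ _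
  have h2' : W (x - y) ≤ C * (1 + ‖x - y‖ ^ 2) := hC _
  have hsq : ‖x - y‖ ^ 2 ≤ 2 * ‖x‖ ^ 2 + 2 * ‖y‖ ^ 2 := by
    have := pow_le_pow_left₀ (norm_nonneg (x - y)) h1 2
    nlinarith [sq_nonneg (‖x‖ - ‖y‖)]
  rw [Real.norm_eq_abs, abs_of_nonneg (hW0 _)]
  show W (x - y) ≤ C * (1 + 2 * ‖x‖ ^ 2) + 2 * C * ‖y‖ ^ 2
  nlinarith [h2', mul_le_mul_of_nonneg_left hsq hC0]

lemma sm_inner {μ : Measure Ed} [SFinite μ] {W : Ed → ℝ} (hWc : Continuous W) :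
    StronglyMeasurable (fun x : Ed => ∫ y, W (x - y) ∂μ) :=
  ((hWc.comp (continuous_fst.sub continuous_snd)).stronglyMeasurable).integral_prod_right'

lemma integrable_inner {μ : Measure Ed} [IsProbabilityMeasure μ]
    (h2 : Integrable (fun x => ‖x‖ ^ 2) μ)
    {W : Ed → ℝ} (hWc : Continuous W) (hW0 : ∀ x, 0 ≤ W x)
    {C : ℝ} (hC : ∀ x, W x ≤ C * (1 + ‖x‖ ^ 2)) :
    Integrable (fun x => ∫ y, W (x - y) ∂μ) μ := by
  have hC0 : 0 ≤ C := growth_C_nonneg hW0 hC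
  set S := ∫ y : Ed, ‖y‖ ^ 2 ∂μ with hS
  refine Integrable.mono' (g := fun x => C * (1 + 2 * S) + (2 * C) * ‖x‖ ^ 2)
    ((integrable_const _).add (h2.const_mul _))
    (sm_inner hWc).aestronglyMeasurable
    (Filter.Eventually.of_forall fun x => ?_)
  have key : ∫ y, W (x - y) ∂μ ≤ ∫ y, (C * (1 + 2 * ‖x‖ ^ 2) + (2 * C) * ‖y‖ ^ 2) ∂μ :=
    integral_mono (integrable_slice h2 hWc hW0 hC x)
      ((integrable_const _).add (h2.const_mul _))
      (fun y => by
        have h1 : ‖x - y‖ ≤ ‖x‖ + ‖y‖ := norm_sub_le _ _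
        have hsq : ‖x - y‖ ^ 2 ≤ 2 * ‖x‖ ^ 2 + 2 * ‖y‖ ^ 2 := by
          have := pow_le_pow_left₀ (norm_nonneg (x - y)) h1 2
          nlinarith [sq_nonneg (‖x‖ - ‖y‖)]
        nlinarith [hC (x - y), mul_le_mul_of_nonneg_left hsq hC0])
  have hval : ∫ y, (C * (1 + 2 * ‖x‖ ^ 2) + (2 * C) * ‖y‖ ^ 2) ∂μ
      = C * (1 + 2 * ‖x‖ ^ 2) + (2 * C) * S := by
    rw [integral_add (integrable_const _) (h2.const_mul _), integral_const, integral_const_mul]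
    simp [hS]
  rw [Real.norm_eq_abs, abs_of_nonneg (integral_nonneg fun y => hW0 _)]
  refine le_trans (key.trans_eq hval) (le_of_eq (by ring))

lemma min_tendsto (a : ℝ) : Tendsto (fun n : ℕ => min a (n : ℝ)) atTop (𝓝 a) := by
  obtain ⟨N, hN⟩ := exists_nat_ge a
  refine tendsto_const_nhds.congr' ?_
  filter_upwards [eventually_ge_atTop N] with n hn
  exact (min_eq_left (hN.trans (by exact_mod_cast hn))).symm

lemma trunc_tendsto {μ : Measure Ed} [IsProbabilityMeasure μ]
    (h2 : Integrable (fun x => ‖x‖ ^ 2) μ)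
    {W : Ed → ℝ} (hWc : Continuous W) (hW0 : ∀ x, 0 ≤ W x)
    {C : ℝ} (hC : ∀ x, W x ≤ C * (1 + ‖x‖ ^ 2)) :
    Tendsto (fun n : ℕ => ∫ x, ∫ y, min (W (x - y)) (n : ℝ) ∂μ ∂μ) atTop
      (𝓝 (∫ x, ∫ y, W (x - y) ∂μ ∂μ)) := by
  have habs : ∀ (n : ℕ) (z : Ed), |min (W z) (n : ℝ)| ≤ (n : ℝ) := fun n z =>
    abs_le.2 ⟨le_trans (neg_nonpos.2 n.cast_nonneg) (le_min (hW0 _) n.cast_nonneg),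
      min_le_right _ _⟩
  have hsmn : ∀ n : ℕ, StronglyMeasurable (fun x : Ed => ∫ y, min (W (x - y)) (n : ℝ) ∂μ) :=
    fun n => (((hWc.comp (continuous_fst.sub continuous_snd)).min
      continuous_const).stronglyMeasurable).integral_prod_right'
  have hint_min : ∀ (n : ℕ) (x : Ed), Integrable (fun y => min (W (x - y)) (n : ℝ)) μ := fun n x =>
    integrable_of_bdd ((hWc.comp (continuous_const.sub continuous_id)).min continuous_const)
      (fun y => habs n _)
  have hbd : ∀ (n : ℕ) (x : Ed), ‖∫ y, min (W (x - y)) (n : ℝ) ∂μ‖ ≤ (n : ℝ) := fun n x => by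
    have := norm_integral_le_of_norm_le_const (μ := μ)
      (f := fun y => min (W (x - y)) (n : ℝ)) (C := (n : ℝ))
      (Filter.Eventually.of_forall fun y => by rw [Real.norm_eq_abs]; exact habs n _)
    simpa using this
  apply integral_tendsto_of_tendsto_of_monotone
  · exact fun n => Integrable.mono' (integrable_const ((n : ℝ)))
      (hsmn n).aestronglyMeasurable (Filter.Eventually.of_forall (hbd n))
  · exact integrable_inner h2 hWc hW0 hC
  · refine Filter.Eventually.of_forall fun x => fun m n hmn => ?_
    exact integral_mono (hint_min m x) (hint_min n x)
      (fun y => min_le_min le_rfl (by exact_mod_cast hmn : (m : ℝ) ≤ n))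
  · refine Filter.Eventually.of_forall fun x => ?_
    exact integral_tendsto_of_tendsto_of_monotone (fun n => hint_min n x)
      (integrable_slice h2 hWc hW0 hC x)
      (Filter.Eventually.of_forall fun y => fun m n hmn =>
        min_le_min le_rfl (by exact_mod_cast hmn))
      (Filter.Eventually.of_forall fun y => min_tendsto _)

lemma key_tendsto {ρ0 : Measure Ed} [IsProbabilityMeasure ρ0]
    {ρ : ℝ → Measure Ed}
    (hρ : ∀ ε : ℝ, 0 < ε → IsProbabilityMeasure (ρ ε))
    (hnar : ∀ f : Ed → ℝ, Continuous f → (∃ C, ∀ x, |f x| ≤ C) →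
      Tendsto (fun ε => ∫ x, f x ∂(ρ ε)) (𝓝[>] (0 : ℝ)) (𝓝 (∫ x, f x ∂ρ0)))
    (G : Ed → Ed → ℝ) (hGc : Continuous fun p : Ed × Ed => G p.1 p.2)
    (hGsupp : HasCompactSupport fun p : Ed × Ed => G p.1 p.2)
    {B : ℝ} (hB : ∀ x y, |G x y| ≤ B)
    {K : Set Ed} (hK : IsCompact K) (hK0 : ∀ x ∉ K, ∀ y, G x y = 0) :
    Tendsto (fun ε => ∫ x, ∫ y, G x y ∂(ρ ε) ∂(ρ ε)) (𝓝[>] (0 : ℝ))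
      (𝓝 (∫ x, ∫ y, G x y ∂ρ0 ∂ρ0)) := by
  have hGx : ∀ x, Continuous fun y => G x y := fun x => hGc.comp (Continuous.prodMk_right x)
  have hGy : ∀ y, Continuous fun x => G x y :=
    fun y => hGc.comp (continuous_id.prodMk continuous_const)
  have hcont : ∀ (μ : Measure Ed), IsProbabilityMeasure μ →
      Continuous (fun x => ∫ y, G x y ∂μ) := by
    intro μ hμ
    rw [continuous_iff_continuousAt]
    intro x0
    apply continuousAt_of_dominated (bound := fun _ => B)
    · exact Filter.Eventually.of_forall fun x => (hGx x).aestronglyMeasurable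
    · exact Filter.Eventually.of_forall fun x =>
        ae_of_all _ fun y => by rw [Real.norm_eq_abs]; exact hB x y
    · exact integrable_const B
    · exact ae_of_all _ fun y => (hGy y).continuousAt
  have hbd : ∀ (μ : Measure Ed), IsProbabilityMeasure μ → ∀ x, ‖∫ y, G x y ∂μ‖ ≤ B := by
    intro μ hμ x
    have := norm_integral_le_of_norm_le_const (μ := μ) (f := fun y => G x y) (C := B)
      (Filter.Eventually.of_forall fun y => by rw [Real.norm_eq_abs]; exact hB x y)
    simpa using this
  set h0 : Ed → ℝ := fun x => ∫ y, G x y ∂ρ0 with hh0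
  have h1 : Tendsto (fun ε => ∫ x, h0 x ∂(ρ ε)) (𝓝[>] (0 : ℝ)) (𝓝 (∫ x, h0 x ∂ρ0)) :=
    hnar h0 (hcont ρ0 inferInstance)
      ⟨B, fun x => by rw [← Real.norm_eq_abs]; exact hbd ρ0 inferInstance x⟩
  have h2 : Tendsto (fun ε => ∫ x, ((∫ y, G x y ∂(ρ ε)) - h0 x) ∂(ρ ε)) (𝓝[>] (0 : ℝ)) (𝓝 0) := by
    rw [NormedAddCommGroup.tendsto_nhds_zero]
    intro θ hθ
    obtain ⟨δ, hδ, hδG⟩ := Metric.uniformContinuous_iff.1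
      (hGsupp.uniformContinuous_of_continuous hGc) (θ / 4) (by positivity)
    obtain ⟨t, ht⟩ := hK.elim_finite_subcover (fun i : Ed => ball i δ) (fun i => isOpen_ball)
      (fun x hx => Set.mem_iUnion.2 ⟨x, mem_ball_self hδ⟩)
    have hev : ∀ᶠ ε in 𝓝[>] (0 : ℝ),
        ∀ i ∈ t, |(∫ y, G i y ∂(ρ ε)) - ∫ y, G i y ∂ρ0| < θ / 4 := by
      rw [eventually_all_finset]
      intro i _
      have hti := hnar (fun y => G i y) (hGx i) ⟨B, fun y => hB i y⟩
      have := Metric.tendsto_nhds.1 hti (θ / 4) (by positivity)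
      simpa [Real.dist_eq] using this
    filter_upwards [hev, self_mem_nhdsWithin] with ε hevε hε
    haveI := hρ ε hε
    have hptC : ∀ x x' : Ed, dist x x' < δ → ∀ (μ : Measure Ed), IsProbabilityMeasure μ →
        |(∫ y, G x y ∂μ) - ∫ y, G x' y ∂μ| ≤ θ / 4 := by
      intro x x' hxx' μ hμ
      rw [← integral_sub (integrable_of_bdd (hGx x) (hB x)) (integrable_of_bdd (hGx x') (hB x'))]
      rw [← Real.norm_eq_abs]
      have hn := norm_integral_le_of_norm_le_const (μ := μ)
        (f := fun y => G x y - G x' y) (C := θ / 4)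
        (Filter.Eventually.of_forall fun y => by
          have hd : dist (x, y) (x', y) < δ := by
            rw [Prod.dist_eq]
            simp only [dist_self]
            exact max_lt hxx' hδ
          have := hδG hd
          rw [Real.norm_eq_abs]
          exact le_of_lt (by simpa [Real.dist_eq] using this))
      simpa using hn
    have hpt : ∀ x, ‖(∫ y, G x y ∂(ρ ε)) - h0 x‖ ≤ 3 * (θ / 4) := by
      intro x
      by_cases hx : x ∈ K
      · obtain ⟨i, hit, hxi⟩ := Set.mem_iUnion₂.1 (ht hx)
        have e1 := hptC x i hxi (ρ ε) inferInstance
        have e2 := hptC x i hxi ρ0 inferInstance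
        have e3 := le_of_lt (hevε i hit)
        rw [Real.norm_eq_abs]
        have hdec : (∫ y, G x y ∂(ρ ε)) - h0 x
            = ((∫ y, G x y ∂(ρ ε)) - ∫ y, G i y ∂(ρ ε))
              + ((∫ y, G i y ∂(ρ ε)) - ∫ y, G i y ∂ρ0)
              + ((∫ y, G i y ∂ρ0) - ∫ y, G x y ∂ρ0) := by rw [hh0]; ring
        rw [hdec]
        have e2' : |(∫ y, G i y ∂ρ0) - ∫ y, G x y ∂ρ0| ≤ θ / 4 := by
          rw [abs_sub_comm]; exact e2
        calc |((∫ y, G x y ∂(ρ ε)) - ∫ y, G i y ∂(ρ ε))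
              + ((∫ y, G i y ∂(ρ ε)) - ∫ y, G i y ∂ρ0)
              + ((∫ y, G i y ∂ρ0) - ∫ y, G x y ∂ρ0)|
            ≤ |((∫ y, G x y ∂(ρ ε)) - ∫ y, G i y ∂(ρ ε))
              + ((∫ y, G i y ∂(ρ ε)) - ∫ y, G i y ∂ρ0)|
              + |(∫ y, G i y ∂ρ0) - ∫ y, G x y ∂ρ0| := abs_add_le _ _
          _ ≤ |(∫ y, G x y ∂(ρ ε)) - ∫ y, G i y ∂(ρ ε)|
              + |(∫ y, G i y ∂(ρ ε)) - ∫ y, G i y ∂ρ0|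
              + |(∫ y, G i y ∂ρ0) - ∫ y, G x y ∂ρ0| := by
                linarith [abs_add_le ((∫ y, G x y ∂(ρ ε)) - ∫ y, G i y ∂(ρ ε))
                  ((∫ y, G i y ∂(ρ ε)) - ∫ y, G i y ∂ρ0)]
          _ ≤ 3 * (θ / 4) := by linarith
      · have hz1 : (∫ y, G x y ∂(ρ ε)) = 0 := by simp [hK0 x hx]
        have hz2 : h0 x = 0 := by rw [hh0]; simp [hK0 x hx]
        rw [hz1, hz2, sub_zero, norm_zero]
        positivity
    have hfin := norm_integral_le_of_norm_le_const (μ := ρ ε)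
      (f := fun x => (∫ y, G x y ∂(ρ ε)) - h0 x) (C := 3 * (θ / 4))
      (Filter.Eventually.of_forall hpt)
    simp only [probReal_univ, mul_one] at hfin
    calc ‖∫ x, ((∫ y, G x y ∂(ρ ε)) - h0 x) ∂(ρ ε)‖ ≤ 3 * (θ / 4) := hfin
      _ < θ := by linarith
  have hmain := h1.add h2
  rw [add_zero] at hmain
  refine Tendsto.congr' ?_ hmain
  filter_upwards [self_mem_nhdsWithin] with ε hε
  haveI := hρ ε hε
  have hint1 : Integrable (fun x => ∫ y, G x y ∂(ρ ε)) (ρ ε) :=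
    integrable_of_bdd (hcont (ρ ε) inferInstance)
      (fun x => by rw [← Real.norm_eq_abs]; exact hbd (ρ ε) inferInstance x)
  have hint0 : Integrable h0 (ρ ε) :=
    integrable_of_bdd (hcont ρ0 inferInstance)
      (fun x => by rw [← Real.norm_eq_abs]; exact hbd ρ0 inferInstance x)
  rw [integral_sub hint1 hint0]
  ring

end Stmt4Aux

open Stmt4Aux

/-- The ε-interaction energy with confining penalty. -/
def Eeps (M : Set (EuclideanSpace ℝ (Fin d))) (W : EuclideanSpace ℝ (Fin d) → ℝ)
    (ε : ℝ) (ρ : Measure (EuclideanSpace ℝ (Fin d))) : ℝ :=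
  (1 / 2) * ∫ x, ∫ y, W (x - y) ∂ρ ∂ρ + (1 / ε) * ∫ x, infDist x M ^ 2 ∂ρ

/-- The limit interaction energy, +∞ off the measures supported in M. -/
def Elim (M : Set (EuclideanSpace ℝ (Fin d))) (W : EuclideanSpace ℝ (Fin d) → ℝ)
    (ρ : Measure (EuclideanSpace ℝ (Fin d))) : EReal :=
  if ρ Mᶜ = 0 then ((1 / 2) * ∫ x, ∫ y, W (x - y) ∂ρ ∂ρ : ℝ) else ⊤

/-- Γ-convergence of E_ε to E with respect to narrow convergence on P₂(ℝ^d) as ε → 0;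
the recovery sequence may be taken constant. -/
theorem stmt4 (M : Set (EuclideanSpace ℝ (Fin d))) (hMc : IsCompact M) (hMne : M.Nonempty)
    (η : ℝ) (hη : 0 < η)
    (hreach : ∀ y : EuclideanSpace ℝ (Fin d), infDist y M < η →
      ∃! p, p ∈ M ∧ dist y p = infDist y M)
    (W : EuclideanSpace ℝ (Fin d) → ℝ) (hW : ContDiff ℝ 2 W)
    (hWsymm : ∀ x, W (-x) = W x) (hW0 : ∀ x, 0 ≤ W x)
    (hWgrowth : ∃ C, ∀ x, W x ≤ C * (1 + ‖x‖ ^ 2)) :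
    -- (i) liminf inequality
    (∀ (ρ0 : Measure (EuclideanSpace ℝ (Fin d))),
      IsProbabilityMeasure ρ0 → Integrable (fun x => ‖x‖ ^ 2) ρ0 →
      ∀ ρ : ℝ → Measure (EuclideanSpace ℝ (Fin d)),
        (∀ ε, 0 < ε → IsProbabilityMeasure (ρ ε) ∧ Integrable (fun x => ‖x‖ ^ 2) (ρ ε)) →
        (∀ f : EuclideanSpace ℝ (Fin d) → ℝ, Continuous f → (∃ C, ∀ x, |f x| ≤ C) →
          Tendsto (fun ε => ∫ x, f x ∂(ρ ε)) (𝓝[>] (0 : ℝ)) (𝓝 (∫ x, f x ∂ρ0))) →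
        Elim M W ρ0 ≤ Filter.liminf (fun ε => ((Eeps M W ε (ρ ε) : ℝ) : EReal)) (𝓝[>] (0 : ℝ)))
    ∧
    -- (ii) limsup inequality along the constant recovery sequence
    (∀ (ρ0 : Measure (EuclideanSpace ℝ (Fin d))),
      IsProbabilityMeasure ρ0 → Integrable (fun x => ‖x‖ ^ 2) ρ0 →
      Filter.limsup (fun ε => ((Eeps M W ε ρ0 : ℝ) : EReal)) (𝓝[>] (0 : ℝ)) ≤ Elim M W ρ0) := by
  obtain ⟨C, hC⟩ := hWgrowth
  have hWc : Continuous W := hW.continuous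
  have hMclosed : IsClosed M := hMc.isClosed
  constructor
  · -- (i) liminf
    intro ρ0 hρ0p hρ0m2 ρ hρ hnar
    haveI := hρ0p
    by_cases hsupp : ρ0 Mᶜ = 0
    · -- case: ρ0 supported in M
      simp only [Elim, if_pos hsupp]
      obtain ⟨R, hR⟩ := hMc.isBounded.subset_closedBall 0
      set χ : EuclideanSpace ℝ (Fin d) → ℝ := fun x => min 1 (max 0 (R + 1 - ‖x‖)) with hχ
      have hχc : Continuous χ := continuous_const.min
        (continuous_const.max (continuous_const.sub continuous_norm))
      have hχ0' : ∀ x, 0 ≤ χ x := fun x => le_min zero_le_one (le_max_left _ _)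
      have hχ1' : ∀ x, χ x ≤ 1 := fun x => min_le_left _ _
      have hχ1 : ∀ x ∈ M, χ x = 1 := by
        intro x hx
        have hxR : ‖x‖ ≤ R := mem_closedBall_zero_iff.1 (hR hx)
        show min 1 (max 0 (R + 1 - ‖x‖)) = 1
        rw [max_eq_right (by linarith : (0 : ℝ) ≤ R + 1 - ‖x‖)]
        exact min_eq_left (by linarith)
      have hχ0 : ∀ x ∉ closedBall (0 : EuclideanSpace ℝ (Fin d)) (R + 1), χ x = 0 := by
        intro x hx
        have hxR : R + 1 < ‖x‖ := by
          by_contra h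
          push_neg at h
          exact hx (mem_closedBall_zero_iff.2 h)
        show min 1 (max 0 (R + 1 - ‖x‖)) = 0
        rw [max_eq_left (by linarith : R + 1 - ‖x‖ ≤ 0)]
        exact min_eq_right zero_le_one
      have haeM : ∀ᵐ x ∂ρ0, x ∈ M := by
        rw [ae_iff]
        exact measure_mono_null (fun x hx => hx) hsupp
      have hmainn : ∀ n : ℕ,
          ((1 / 2 * ∫ x, ∫ y, min (W (x - y)) (n : ℝ) ∂ρ0 ∂ρ0 : ℝ) : EReal)
            ≤ Filter.liminf (fun ε => ((Eeps M W ε (ρ ε) : ℝ) : EReal)) (𝓝[>] (0 : ℝ)) := by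
        intro n
        set G : EuclideanSpace ℝ (Fin d) → EuclideanSpace ℝ (Fin d) → ℝ :=
          fun x y => min (W (x - y)) (n : ℝ) * (χ x * χ y) with hG
        have hGc : Continuous fun p : EuclideanSpace ℝ (Fin d) × EuclideanSpace ℝ (Fin d) =>
            G p.1 p.2 :=
          ((hWc.comp (continuous_fst.sub continuous_snd)).min continuous_const).mul
            ((hχc.comp continuous_fst).mul (hχc.comp continuous_snd))
        have hgn0 : ∀ z, 0 ≤ min (W z) (n : ℝ) := fun z => le_min (hW0 z) n.cast_nonneg
        have hG0 : ∀ x y, 0 ≤ G x y := fun x y =>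
          mul_nonneg (hgn0 _) (mul_nonneg (hχ0' x) (hχ0' y))
        have hGle : ∀ x y, G x y ≤ min (W (x - y)) (n : ℝ) := fun x y =>
          mul_le_of_le_one_right (hgn0 _) (mul_le_one₀ (hχ1' x) (hχ0' y) (hχ1' y))
        have hGB : ∀ x y, |G x y| ≤ (n : ℝ) := fun x y => by
          rw [abs_of_nonneg (hG0 x y)]
          exact (hGle x y).trans (min_le_right _ _)
        have hGsupp : HasCompactSupport fun p : EuclideanSpace ℝ (Fin d) × EuclideanSpace ℝ (Fin d) =>
            G p.1 p.2 := by
          apply HasCompactSupport.intro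
            ((isCompact_closedBall (0 : EuclideanSpace ℝ (Fin d)) (R + 1)).prod
              (isCompact_closedBall (0 : EuclideanSpace ℝ (Fin d)) (R + 1)))
          intro p hp
          have hor : p.1 ∉ closedBall (0 : EuclideanSpace ℝ (Fin d)) (R + 1) ∨
              p.2 ∉ closedBall (0 : EuclideanSpace ℝ (Fin d)) (R + 1) := by
            by_contra h
            push_neg at h
            exact hp (Set.mem_prod.2 ⟨h.1, h.2⟩)
          rcases hor with h | h
          · show min (W (p.1 - p.2)) (n : ℝ) * (χ p.1 * χ p.2) = 0
            rw [hχ0 _ h]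
            ring
          · show min (W (p.1 - p.2)) (n : ℝ) * (χ p.1 * χ p.2) = 0
            rw [hχ0 _ h]
            ring
        have hK0 : ∀ x ∉ closedBall (0 : EuclideanSpace ℝ (Fin d)) (R + 1),
            ∀ y, G x y = 0 := fun x hx y => by
          show min (W (x - y)) (n : ℝ) * (χ x * χ y) = 0
          rw [hχ0 x hx]
          ring
        have hkey := key_tendsto (fun ε hε => (hρ ε hε).1) hnar G hGc hGsupp hGB
          (isCompact_closedBall (0 : EuclideanSpace ℝ (Fin d)) (R + 1)) hK0
        have hA0 : (∫ x, ∫ y, G x y ∂ρ0 ∂ρ0)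
            = ∫ x, ∫ y, min (W (x - y)) (n : ℝ) ∂ρ0 ∂ρ0 := by
          apply integral_congr_ae
          filter_upwards [haeM] with x hx
          apply integral_congr_ae
          filter_upwards [haeM] with y hy
          show min (W (x - y)) (n : ℝ) * (χ x * χ y) = min (W (x - y)) (n : ℝ)
          rw [hχ1 x hx, hχ1 y hy]
          ring
        have hlow : ∀ᶠ ε in 𝓝[>] (0 : ℝ),
            ((1 / 2 * ∫ x, ∫ y, G x y ∂(ρ ε) ∂(ρ ε) : ℝ) : EReal)
              ≤ ((Eeps M W ε (ρ ε) : ℝ) : EReal) := by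
          filter_upwards [self_mem_nhdsWithin] with ε hε
          haveI := (hρ ε hε).1
          have hm2 := (hρ ε hε).2
          rw [EReal.coe_le_coe_iff]
          have hIG : ∀ x, Integrable (fun y => G x y) (ρ ε) := fun x =>
            integrable_of_bdd (hGc.comp (Continuous.prodMk_right x)) (hGB x)
          have hinner : ∀ x, (∫ y, G x y ∂(ρ ε)) ≤ ∫ y, W (x - y) ∂(ρ ε) := fun x =>
            integral_mono (hIG x) (integrable_slice hm2 hWc hW0 hC x)
              (fun y => (hGle x y).trans (min_le_left _ _))
          have houter : (∫ x, ∫ y, G x y ∂(ρ ε) ∂(ρ ε))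
              ≤ ∫ x, ∫ y, W (x - y) ∂(ρ ε) ∂(ρ ε) := by
            refine integral_mono ?_ (integrable_inner hm2 hWc hW0 hC) hinner
            refine Integrable.mono' (integrable_const ((n : ℝ)))
              ((hGc.stronglyMeasurable.integral_prod_right').aestronglyMeasurable)
              (Filter.Eventually.of_forall fun x => ?_)
            have := norm_integral_le_of_norm_le_const (μ := ρ ε)
              (f := fun y => G x y) (C := (n : ℝ))
              (Filter.Eventually.of_forall fun y => by
                rw [Real.norm_eq_abs]; exact hGB x y)
            simpa using this
          have hpen : 0 ≤ (1 / ε) * ∫ x, infDist x M ^ 2 ∂(ρ ε) :=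
            mul_nonneg (one_div_pos.2 (Set.mem_Ioi.1 hε)).le
              (integral_nonneg fun x => sq_nonneg _)
          show 1 / 2 * ∫ x, ∫ y, G x y ∂(ρ ε) ∂(ρ ε) ≤ Eeps M W ε (ρ ε)
          simp only [Eeps]
          linarith
        have htl : Tendsto
            (fun ε => ((1 / 2 * ∫ x, ∫ y, G x y ∂(ρ ε) ∂(ρ ε) : ℝ) : EReal))
            (𝓝[>] (0 : ℝ)) (𝓝 ((1 / 2 * ∫ x, ∫ y, G x y ∂ρ0 ∂ρ0 : ℝ) : EReal)) :=
          (continuous_coe_real_ereal.tendsto _).comp (hkey.const_mul (1 / 2))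
        calc ((1 / 2 * ∫ x, ∫ y, min (W (x - y)) (n : ℝ) ∂ρ0 ∂ρ0 : ℝ) : EReal)
            = ((1 / 2 * ∫ x, ∫ y, G x y ∂ρ0 ∂ρ0 : ℝ) : EReal) := by rw [hA0]
          _ = Filter.liminf
              (fun ε => ((1 / 2 * ∫ x, ∫ y, G x y ∂(ρ ε) ∂(ρ ε) : ℝ) : EReal))
              (𝓝[>] (0 : ℝ)) := (htl.liminf_eq).symm
          _ ≤ _ := Filter.liminf_le_liminf hlow
      have htr := trunc_tendsto hρ0m2 hWc hW0 hC (μ := ρ0)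
      have htr' : Tendsto
          (fun n : ℕ => ((1 / 2 * ∫ x, ∫ y, min (W (x - y)) (n : ℝ) ∂ρ0 ∂ρ0 : ℝ) : EReal)) atTop
          (𝓝 ((1 / 2 * ∫ x, ∫ y, W (x - y) ∂ρ0 ∂ρ0 : ℝ) : EReal)) :=
        (continuous_coe_real_ereal.tendsto _).comp (htr.const_mul (1 / 2))
      exact le_of_tendsto htr' (Filter.Eventually.of_forall hmainn)
    · -- case: mass outside M, liminf is ⊤
      simp only [Elim, if_neg hsupp]
      have hcover : Mᶜ ⊆ ⋃ n : ℕ, {x : EuclideanSpace ℝ (Fin d) | 1 / ((n : ℝ) + 1) < infDist x M} := by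
        intro x hx
        have h0 : infDist x M ≠ 0 := fun h => hx ((hMclosed.mem_iff_infDist_zero hMne).2 h)
        have hpos : 0 < infDist x M := lt_of_le_of_ne infDist_nonneg (Ne.symm h0)
        obtain ⟨n, hn⟩ := exists_nat_one_div_lt hpos
        exact Set.mem_iUnion.2 ⟨n, hn⟩
      have hex : ∃ n : ℕ, ρ0 {x : EuclideanSpace ℝ (Fin d) | 1 / ((n : ℝ) + 1) < infDist x M} ≠ 0 := by
        by_contra h
        push_neg at h
        exact hsupp (measure_mono_null hcover (measure_iUnion_null_iff.2 h))
      obtain ⟨n, hn⟩ := hex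
      set δ : ℝ := 1 / ((n : ℝ) + 1) with hδdef
      have hδ : 0 < δ := by positivity
      set f : EuclideanSpace ℝ (Fin d) → ℝ :=
        fun x => min 1 ((2 / δ) * max 0 (infDist x M - δ / 2)) with hf
      have hfc : Continuous f := continuous_const.min
        (continuous_const.mul (continuous_const.max ((continuous_infDist_pt M).sub continuous_const)))
      have hf0 : ∀ x, 0 ≤ f x :=
        fun x => le_min zero_le_one (mul_nonneg (by positivity) (le_max_left _ _))
      have hf1 : ∀ x, f x ≤ 1 := fun x => min_le_left _ _
      have hfb : ∀ x, |f x| ≤ 1 := fun x => abs_le.2 ⟨by linarith [hf0 x], hf1 x⟩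
      set U : Set (EuclideanSpace ℝ (Fin d)) := {x | δ < infDist x M} with hU
      have hUmeas : MeasurableSet U :=
        (isOpen_lt continuous_const (continuous_infDist_pt M)).measurableSet
      have hfU : ∀ x ∈ U, f x = 1 := by
        intro x hx
        have h1 : δ < infDist x M := hx
        have h2 : (2 / δ) * (δ / 2) ≤ (2 / δ) * (infDist x M - δ / 2) :=
          mul_le_mul_of_nonneg_left (by linarith) (by positivity)
        have h3 : (2 / δ) * (δ / 2) = 1 := by field_simp
        show min 1 ((2 / δ) * max 0 (infDist x M - δ / 2)) = 1
        rw [max_eq_right (by linarith : (0 : ℝ) ≤ infDist x M - δ / 2)]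
        exact min_eq_left (by linarith)
      have hc0 : 0 < ∫ x, f x ∂ρ0 := by
        have hind : ∫ x, U.indicator (1 : EuclideanSpace ℝ (Fin d) → ℝ) x ∂ρ0 ≤ ∫ x, f x ∂ρ0 := by
          apply integral_mono ((integrable_const (1 : ℝ)).indicator hUmeas)
            (integrable_of_bdd hfc hfb)
          intro x
          by_cases hx : x ∈ U
          · rw [Set.indicator_of_mem hx]
            exact (hfU x hx).ge
          · rw [Set.indicator_of_notMem hx]
            exact hf0 x
        rw [integral_indicator_one hUmeas] at hind
        rw [measureReal_def] at hind
        have := ENNReal.toReal_pos hn (measure_ne_top ρ0 U)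
        linarith
      set c0 : ℝ := ∫ x, f x ∂ρ0 with hc0def
      have hptf : ∀ x, (δ / 2) ^ 2 * f x ≤ infDist x M ^ 2 := by
        intro x
        by_cases hx : infDist x M ≤ δ / 2
        · have hm : max 0 (infDist x M - δ / 2) = 0 := max_eq_left (by linarith)
          have hfx : f x = 0 := by
            show min 1 ((2 / δ) * max 0 (infDist x M - δ / 2)) = 0
            rw [hm, mul_zero]
            exact min_eq_right zero_le_one
          rw [hfx, mul_zero]
          positivity
        · push_neg at hx
          have h1 : (δ / 2) ^ 2 ≤ infDist x M ^ 2 := by nlinarith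
          calc (δ / 2) ^ 2 * f x ≤ (δ / 2) ^ 2 * 1 :=
                mul_le_mul_of_nonneg_left (hf1 x) (by positivity)
            _ = (δ / 2) ^ 2 := mul_one _
            _ ≤ _ := h1
      refine le_of_eq (Filter.Tendsto.liminf_eq ?_).symm
      rw [EReal.tendsto_nhds_top_iff_real]
      intro b
      set t : ℝ := (δ / 2) ^ 2 * (c0 / 2) with htdef
      have ht : 0 < t := by positivity
      have hevf : ∀ᶠ ε in 𝓝[>] (0 : ℝ), c0 / 2 < ∫ x, f x ∂(ρ ε) :=
        (hnar f hfc ⟨1, hfb⟩).eventually_const_lt (by linarith)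
      have hsmall : Set.Ioo (0 : ℝ) (t / (|b| + 1)) ∈ 𝓝[>] (0 : ℝ) :=
        Ioo_mem_nhdsGT_of_mem ⟨le_refl 0, by positivity⟩
      filter_upwards [hevf, hsmall, self_mem_nhdsWithin] with ε hfε hεt hε
      haveI := (hρ ε hε).1
      have hm2 := (hρ ε hε).2
      obtain ⟨m0, hm0⟩ := hMne
      have hindint : Integrable (fun x => infDist x M ^ 2) (ρ ε) := by
        refine Integrable.mono' (g := fun x => 2 * ‖x‖ ^ 2 + 2 * ‖m0‖ ^ 2)
          ((hm2.const_mul 2).add (integrable_const _))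
          (((continuous_infDist_pt M).pow 2).aestronglyMeasurable)
          (Filter.Eventually.of_forall fun x => ?_)
        have h1 : infDist x M ≤ dist x m0 := infDist_le_dist_of_mem hm0
        have h2 : dist x m0 ≤ ‖x‖ + ‖m0‖ := by
          rw [dist_eq_norm]
          exact norm_sub_le _ _
        rw [Real.norm_eq_abs, abs_of_nonneg (sq_nonneg _)]
        have h3 : 0 ≤ infDist x M := infDist_nonneg
        have h4 : (0 : ℝ) ≤ dist x m0 := dist_nonneg
        show infDist x M ^ 2 ≤ 2 * ‖x‖ ^ 2 + 2 * ‖m0‖ ^ 2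
        have h5 : infDist x M ^ 2 ≤ (‖x‖ + ‖m0‖) ^ 2 := pow_le_pow_left₀ h3 (h1.trans h2) 2
        nlinarith [sq_nonneg (‖x‖ - ‖m0‖)]
      have hlow2 : t ≤ ∫ x, infDist x M ^ 2 ∂(ρ ε) := by
        have h1 : ∫ x, (δ / 2) ^ 2 * f x ∂(ρ ε) ≤ ∫ x, infDist x M ^ 2 ∂(ρ ε) :=
          integral_mono ((integrable_of_bdd hfc hfb).const_mul _) hindint hptf
        rw [integral_const_mul] at h1
        have h2 : (δ / 2) ^ 2 * (c0 / 2) ≤ (δ / 2) ^ 2 * ∫ x, f x ∂(ρ ε) :=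
          mul_le_mul_of_nonneg_left (le_of_lt hfε) (by positivity)
        calc t = (δ / 2) ^ 2 * (c0 / 2) := htdef
          _ ≤ (δ / 2) ^ 2 * ∫ x, f x ∂(ρ ε) := h2
          _ ≤ _ := h1
      have hWnn : 0 ≤ (1 / 2) * ∫ x, ∫ y, W (x - y) ∂(ρ ε) ∂(ρ ε) :=
        mul_nonneg (by norm_num) (integral_nonneg fun x => integral_nonneg fun y => hW0 _)
      have hb2 : b < (1 / ε) * t := by
        have hεb : ε * (|b| + 1) < t := (lt_div_iff₀ (by positivity)).1 hεt.2
        have hb1 : |b| + 1 ≤ t / ε := by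
          rw [le_div_iff₀ hε]
          linarith
        calc b ≤ |b| := le_abs_self b
          _ < |b| + 1 := by linarith
          _ ≤ t / ε := hb1
          _ = (1 / ε) * t := by ring
      rw [EReal.coe_lt_coe_iff]
      have h5 : (1 / ε) * t ≤ (1 / ε) * ∫ x, infDist x M ^ 2 ∂(ρ ε) :=
        mul_le_mul_of_nonneg_left hlow2 (one_div_pos.2 (Set.mem_Ioi.1 hε)).le
      show b < Eeps M W ε (ρ ε)
      simp only [Eeps]
      linarith
  · -- (ii) limsup
    intro ρ0 hρ0p hρ0m2
    haveI := hρ0p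
    by_cases hsupp : ρ0 Mᶜ = 0
    · simp only [Elim, if_pos hsupp]
      have hpen : ∫ x, infDist x M ^ 2 ∂ρ0 = 0 := by
        apply integral_eq_zero_of_ae
        rw [Filter.EventuallyEq, ae_iff]
        refine measure_mono_null ?_ hsupp
        intro x hx
        simp only [Set.mem_setOf_eq, Pi.zero_apply] at hx
        simp only [Set.mem_compl_iff]
        intro hxM
        exact hx (by rw [infDist_zero_of_mem hxM]; norm_num)
      have heq : ∀ ε : ℝ, Eeps M W ε ρ0 = 1 / 2 * ∫ x, ∫ y, W (x - y) ∂ρ0 ∂ρ0 := by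
        intro ε
        simp only [Eeps, hpen]
        ring
      simp only [heq]
      rw [limsup_const]
    · simp only [Elim, if_neg hsupp]
      exact le_top

end
end

section
/- For every ε > 0 the functional E_ε attains its minimum on P₂(ℝ^d): any minimizing sequence has uniformly bounded second moments, hence is tight, and E_ε is narrowly lower semicontinuous, yielding a minimizer. -/
open Metric MeasureTheory Filter Topology Set

noncomputable section
namespace Stmt5Proof

lemma exists_ulim (U : Ultrafilter ℕ) {a : ℕ → ℝ} {c C : ℝ} (h : ∀ n, a n ∈ Set.Icc c C) :
    ∃ L, Tendsto a U (nhds L) := by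
  have hmem : Set.Icc c C ∈ Ultrafilter.map a U := by
    rw [Ultrafilter.mem_map]
    exact Filter.univ_mem' (fun n => h n)
  obtain ⟨L, _, h2⟩ := isCompact_Icc.ultrafilter_le_nhds (Ultrafilter.map a U)
    (le_principal_iff.mpr hmem)
  exact ⟨L, h2⟩

/- staircase pointwise lemmas -/
lemma staircase_upper {t δ : ℝ} (hδ : 0 < δ) (ht : 0 ≤ t) {N : ℕ} (hN : t ≤ N * δ) :
    t ≤ δ * ∑ k ∈ Finset.range N, (if (k:ℝ)*δ < t then (1:ℝ) else 0) := by
  have key : ∀ k : ℕ, min (((k:ℝ)+1)*δ) t - min ((k:ℝ)*δ) t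
      ≤ δ * (if (k:ℝ)*δ < t then (1:ℝ) else 0) := by
    intro k
    by_cases h : (k:ℝ)*δ < t
    · rw [if_pos h, mul_one, min_eq_left h.le]
      have : min (((k:ℝ)+1)*δ) t ≤ ((k:ℝ)+1)*δ := min_le_left _ _
      nlinarith
    · push_neg at h
      rw [if_neg (not_lt.mpr h), mul_zero, min_eq_right h,
        min_eq_right (h.trans (by nlinarith))]
      simp
  have tel : ∑ k ∈ Finset.range N, (min (((k:ℝ)+1)*δ) t - min ((k:ℝ)*δ) t)
      = min ((N:ℝ)*δ) t - min ((0:ℝ)*δ) t := by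
    have := Finset.sum_range_sub (fun k : ℕ => min ((k:ℝ)*δ) t) N
    simpa [Nat.cast_add, Nat.cast_one] using this
  have h0 : min ((0:ℝ)*δ) t = 0 := by simp [ht]
  have hNt : min ((N:ℝ)*δ) t = t := min_eq_right hN
  calc t = ∑ k ∈ Finset.range N, (min (((k:ℝ)+1)*δ) t - min ((k:ℝ)*δ) t) := by
        rw [tel, h0, hNt]; ring
    _ ≤ ∑ k ∈ Finset.range N, δ * (if (k:ℝ)*δ < t then (1:ℝ) else 0) :=
        Finset.sum_le_sum fun k _ => key k
    _ = δ * ∑ k ∈ Finset.range N, (if (k:ℝ)*δ < t then (1:ℝ) else 0) := by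
        rw [Finset.mul_sum]

lemma staircase_lower {t δ : ℝ} (hδ : 0 < δ) (ht : 0 ≤ t) (N : ℕ) :
    δ * ∑ k ∈ Finset.range N, (if ((k:ℝ)+1)*δ < t then (1:ℝ) else 0) ≤ t := by
  have key : ∀ k : ℕ, δ * (if ((k:ℝ)+1)*δ < t then (1:ℝ) else 0)
      ≤ min (((k:ℝ)+1)*δ) t - min ((k:ℝ)*δ) t := by
    intro k
    by_cases h : ((k:ℝ)+1)*δ < t
    · rw [if_pos h, mul_one, min_eq_left h.le, min_eq_left (by nlinarith)]
      ring_nf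
      nlinarith
    · rw [if_neg h, mul_zero]
      have : min ((k:ℝ)*δ) t ≤ min (((k:ℝ)+1)*δ) t :=
        min_le_min (by nlinarith) le_rfl
      linarith
  have tel : ∑ k ∈ Finset.range N, (min (((k:ℝ)+1)*δ) t - min ((k:ℝ)*δ) t)
      = min ((N:ℝ)*δ) t - min ((0:ℝ)*δ) t := by
    have := Finset.sum_range_sub (fun k : ℕ => min ((k:ℝ)*δ) t) N
    simpa [Nat.cast_add, Nat.cast_one] using this
  have h0 : min ((0:ℝ)*δ) t = 0 := by simp [ht]
  calc δ * ∑ k ∈ Finset.range N, (if ((k:ℝ)+1)*δ < t then (1:ℝ) else 0)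
      = ∑ k ∈ Finset.range N, δ * (if ((k:ℝ)+1)*δ < t then (1:ℝ) else 0) := by
        rw [Finset.mul_sum]
    _ ≤ ∑ k ∈ Finset.range N, (min (((k:ℝ)+1)*δ) t - min ((k:ℝ)*δ) t) :=
        Finset.sum_le_sum fun k _ => key k
    _ = min ((N:ℝ)*δ) t - 0 := by rw [tel, h0]
    _ ≤ t := by simp [min_le_right]


section Abstract

variable {X : Type*} [MetricSpace X] [CompactSpace X] [Nonempty X]
  [MeasurableSpace X] [BorelSpace X]
variable (U : Ultrafilter ℕ) (ν : ℕ → Measure X)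

set_option linter.unusedSectionVars false

/-- real value of a measure of a set -/
def mval (A : Set X) : ℕ → ℝ := fun n => ((ν n) A).toReal

/-- the ultrafilter limit of the measures of a set -/
def lo (A : Set X) : ℝ := limUnder U (mval ν A)

/-- outer regularization over open supersets -/
def lam (F : Set X) : ℝ := sInf (lo U ν '' {V | IsOpen V ∧ F ⊆ V})

lemma lam_set_nonempty (F : Set X) : (lo U ν '' {V | IsOpen V ∧ F ⊆ V}).Nonempty :=
  ⟨lo U ν univ, ⟨univ, ⟨isOpen_univ, subset_univ F⟩, rfl⟩⟩

lemma integrable_of_cont (m : Measure X) [IsFiniteMeasure m] {f : X → ℝ}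
    (hf : Continuous f) : Integrable f m := by
  obtain ⟨z, _, hz⟩ := isCompact_univ.exists_isMaxOn univ_nonempty
    (continuous_abs.comp hf).continuousOn
  exact ⟨hf.aestronglyMeasurable,
    HasFiniteIntegral.of_bounded (C := |f z|) (Filter.Eventually.of_forall fun a => hz (mem_univ a))⟩

omit [CompactSpace X] [Nonempty X] in
lemma integral_le_staircase (m : Measure X) [IsProbabilityMeasure m] {f : X → ℝ}
    (hfi : Integrable f m) (hf : Continuous f) (hf0 : ∀ x, 0 ≤ f x) {δ : ℝ} (hδ : 0 < δ)
    {N : ℕ} (hbound : ∀ x, f x ≤ N * δ) :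
    ∫ x, f x ∂m ≤ δ * ∑ k ∈ Finset.range N, (m {x | (k:ℝ)*δ < f x}).toReal := by
  set h : X → ℝ := fun x => ∑ k ∈ Finset.range N,
    ({y | (k:ℝ)*δ < f y}).indicator (fun _ => δ) x with hh
  have hmeas : ∀ k : ℕ, MeasurableSet {y : X | (k:ℝ)*δ < f y} :=
    fun k => (isOpen_lt continuous_const hf).measurableSet
  have hpoint : ∀ x, f x ≤ h x := by
    intro x
    have : h x = δ * ∑ k ∈ Finset.range N, (if (k:ℝ)*δ < f x then (1:ℝ) else 0) := by
      simp only [hh, Finset.mul_sum, Set.indicator_apply, mem_setOf_eq, mul_ite, mul_one,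
        mul_zero]
    rw [this]
    exact staircase_upper hδ (hf0 x) (hbound x)
  have hint : ∀ k : ℕ, Integrable (({y | (k:ℝ)*δ < f y}).indicator (fun _ => δ)) m :=
    fun k => (integrable_const δ).indicator (hmeas k)
  have hinth : Integrable h m := integrable_finset_sum _ (fun k _ => hint k)
  calc ∫ x, f x ∂m ≤ ∫ x, h x ∂m := integral_mono hfi hinth hpoint
    _ = ∑ k ∈ Finset.range N, ∫ x, ({y | (k:ℝ)*δ < f y}).indicator (fun _ => δ) x ∂m :=
        integral_finset_sum _ (fun k _ => hint k)
    _ = ∑ k ∈ Finset.range N, (m {y | (k:ℝ)*δ < f y}).toReal * δ := by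
        refine Finset.sum_congr rfl fun k _ => ?_
        rw [integral_indicator_const δ (hmeas k), smul_eq_mul]; rfl
    _ = δ * ∑ k ∈ Finset.range N, (m {x | (k:ℝ)*δ < f x}).toReal := by
        rw [Finset.mul_sum]
        exact Finset.sum_congr rfl fun k _ => mul_comm _ _

omit [CompactSpace X] [Nonempty X] in
lemma staircase_le_integral (m : Measure X) [IsProbabilityMeasure m] {f : X → ℝ}
    (hfi : Integrable f m) (hf : Continuous f) (hf0 : ∀ x, 0 ≤ f x) {δ : ℝ} (hδ : 0 < δ)
    (N : ℕ) :
    δ * ∑ k ∈ Finset.range N, (m {x | ((k:ℝ)+1)*δ < f x}).toReal ≤ ∫ x, f x ∂m := by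
  set h : X → ℝ := fun x => ∑ k ∈ Finset.range N,
    ({y | ((k:ℝ)+1)*δ < f y}).indicator (fun _ => δ) x with hh
  have hmeas : ∀ k : ℕ, MeasurableSet {y : X | ((k:ℝ)+1)*δ < f y} :=
    fun k => (isOpen_lt continuous_const hf).measurableSet
  have hpoint : ∀ x, h x ≤ f x := by
    intro x
    have : h x = δ * ∑ k ∈ Finset.range N, (if ((k:ℝ)+1)*δ < f x then (1:ℝ) else 0) := by
      simp only [hh, Finset.mul_sum, Set.indicator_apply, mem_setOf_eq, mul_ite, mul_one,
        mul_zero]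
    rw [this]
    exact staircase_lower hδ (hf0 x) N
  have hint : ∀ k : ℕ, Integrable (({y | ((k:ℝ)+1)*δ < f y}).indicator (fun _ => δ)) m :=
    fun k => (integrable_const δ).indicator (hmeas k)
  have hinth : Integrable h m := integrable_finset_sum _ (fun k _ => hint k)
  calc δ * ∑ k ∈ Finset.range N, (m {x | ((k:ℝ)+1)*δ < f x}).toReal
      = ∑ k ∈ Finset.range N, ∫ x, ({y | ((k:ℝ)+1)*δ < f y}).indicator (fun _ => δ) x ∂m := by
        rw [Finset.mul_sum]
        refine Finset.sum_congr rfl fun k _ => ?_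
        rw [integral_indicator_const δ (hmeas k), smul_eq_mul, mul_comm]; rfl
    _ = ∫ x, h x ∂m := (integral_finset_sum _ (fun k _ => hint k)).symm
    _ ≤ ∫ x, f x ∂m := integral_mono hinth hfi hpoint


variable (hν : ∀ n, IsProbabilityMeasure (ν n))
include hν

lemma mval_mem (A : Set X) (n : ℕ) : mval ν A n ∈ Set.Icc (0:ℝ) 1 := by
  constructor
  · exact ENNReal.toReal_nonneg
  · have := hν n
    have h1 : (ν n) A ≤ 1 := prob_le_one
    simpa [mval] using ENNReal.toReal_mono (by simp) h1

lemma tendsto_lo (A : Set X) : Tendsto (mval ν A) U (nhds (lo U ν A)) :=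
  tendsto_nhds_limUnder (exists_ulim U (fun n => mval_mem ν hν A n))

lemma lo_nonneg (A : Set X) : 0 ≤ lo U ν A :=
  ge_of_tendsto (tendsto_lo U ν hν A) (Eventually.of_forall fun n => (mval_mem ν hν A n).1)

lemma lo_le_one (A : Set X) : lo U ν A ≤ 1 :=
  le_of_tendsto (tendsto_lo U ν hν A) (Eventually.of_forall fun n => (mval_mem ν hν A n).2)

lemma lo_mono {A B : Set X} (h : A ⊆ B) : lo U ν A ≤ lo U ν B := by
  refine le_of_tendsto_of_tendsto' (tendsto_lo U ν hν A) (tendsto_lo U ν hν B) fun n => ?_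
  have := hν n
  exact ENNReal.toReal_mono (measure_ne_top _ _) (measure_mono h)

lemma lo_union_le (A B : Set X) : lo U ν (A ∪ B) ≤ lo U ν A + lo U ν B := by
  refine le_of_tendsto_of_tendsto' (tendsto_lo U ν hν (A ∪ B))
    ((tendsto_lo U ν hν A).add (tendsto_lo U ν hν B)) fun n => ?_
  have := hν n
  have h1 : (ν n) (A ∪ B) ≤ (ν n) A + (ν n) B := measure_union_le A B
  have h2 := ENNReal.toReal_mono (by
    exact ENNReal.add_ne_top.mpr ⟨measure_ne_top _ _, measure_ne_top _ _⟩) h1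
  rw [ENNReal.toReal_add (measure_ne_top _ _) (measure_ne_top _ _)] at h2
  exact h2

lemma lo_union_disjoint {A B : Set X} (hd : Disjoint A B) (hB : MeasurableSet B) :
    lo U ν (A ∪ B) = lo U ν A + lo U ν B := by
  refine tendsto_nhds_unique (tendsto_lo U ν hν (A ∪ B)) ?_
  have : (fun n => mval ν A n + mval ν B n) = mval ν (A ∪ B) := by
    funext n
    have := hν n
    rw [mval, mval, mval, measure_union hd hB,
      ENNReal.toReal_add (measure_ne_top _ _) (measure_ne_top _ _)]
  rw [← this]
  exact (tendsto_lo U ν hν A).add (tendsto_lo U ν hν B)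

lemma lo_univ : lo U ν univ = 1 := by
  refine tendsto_nhds_unique (tendsto_lo U ν hν univ) ?_
  have : mval ν univ = fun _ => (1:ℝ) := by
    funext n; have := hν n; simp [mval]
  rw [this]
  exact tendsto_const_nhds

lemma lam_set_bddBelow (F : Set X) : BddBelow (lo U ν '' {V | IsOpen V ∧ F ⊆ V}) := by
  refine ⟨0, ?_⟩
  rintro x ⟨V, _, rfl⟩
  exact lo_nonneg U ν hν V

lemma lam_nonneg (F : Set X) : 0 ≤ lam U ν F :=
  le_csInf (lam_set_nonempty U ν F) (by rintro x ⟨V, _, rfl⟩; exact lo_nonneg U ν hν V)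

lemma lam_le_lo {F V : Set X} (hV : IsOpen V) (hFV : F ⊆ V) : lam U ν F ≤ lo U ν V :=
  csInf_le (lam_set_bddBelow U ν hν F) ⟨V, ⟨hV, hFV⟩, rfl⟩

lemma lam_mono {F G : Set X} (h : F ⊆ G) : lam U ν F ≤ lam U ν G := by
  refine le_csInf (lam_set_nonempty U ν G) ?_
  rintro x ⟨V, ⟨hVo, hGV⟩, rfl⟩
  exact lam_le_lo U ν hν hVo (h.trans hGV)

lemma exists_open_lam {F : Set X} {δ : ℝ} (hδ : 0 < δ) :
    ∃ V : Set X, IsOpen V ∧ F ⊆ V ∧ lo U ν V < lam U ν F + δ := by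
  have h : lam U ν F < lam U ν F + δ := by linarith
  obtain ⟨x, hx, hlt⟩ := (csInf_lt_iff (lam_set_bddBelow U ν hν F)
    (lam_set_nonempty U ν F)).mp h
  obtain ⟨V, ⟨hVo, hFV⟩, rfl⟩ := hx
  exact ⟨V, hVo, hFV, hlt⟩

lemma lam_union_le (F G : Set X) : lam U ν (F ∪ G) ≤ lam U ν F + lam U ν G := by
  refine le_of_forall_pos_le_add fun δ hδ => ?_
  obtain ⟨V1, hV1o, hFV1, h1⟩ := exists_open_lam U ν hν (F := F) (half_pos hδ)
  obtain ⟨V2, hV2o, hGV2, h2⟩ := exists_open_lam U ν hν (F := G) (half_pos hδ)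
  have := (lam_le_lo U ν hν (hV1o.union hV2o) (union_subset_union hFV1 hGV2)).trans
    (lo_union_le U ν hν V1 V2)
  linarith

lemma lam_union_disjoint {F G : Set X} (hF : IsCompact F) (hG : IsCompact G)
    (hd : Disjoint F G) : lam U ν F + lam U ν G ≤ lam U ν (F ∪ G) := by
  obtain ⟨W1, W2, hW1o, hW2o, hFW1, hGW2, hWd⟩ :=
    SeparatedNhds.of_isCompact_isCompact hF hG hd
  refine le_csInf (lam_set_nonempty U ν (F ∪ G)) ?_
  rintro x ⟨V, ⟨hVo, hFGV⟩, rfl⟩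
  have hsub1 : F ⊆ V ∩ W1 := subset_inter (subset_union_left.trans hFGV) hFW1
  have hsub2 : G ⊆ V ∩ W2 := subset_inter (subset_union_right.trans hFGV) hGW2
  have h1 : lam U ν F ≤ lo U ν (V ∩ W1) := lam_le_lo U ν hν (hVo.inter hW1o) hsub1
  have h2 : lam U ν G ≤ lo U ν (V ∩ W2) := lam_le_lo U ν hν (hVo.inter hW2o) hsub2
  have hdisj : Disjoint (V ∩ W1) (V ∩ W2) :=
    (hWd.mono inter_subset_right inter_subset_right)
  have := lo_union_disjoint U ν hν hdisj ((hVo.inter hW2o).measurableSet)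
  have hmono : lo U ν ((V ∩ W1) ∪ (V ∩ W2)) ≤ lo U ν V :=
    lo_mono U ν hν (union_subset inter_subset_left inter_subset_left)
  linarith

/-- the content defined by the ultrafilter limit -/
def limCont : Content X where
  toFun := fun F => Real.toNNReal (lam U ν F.1)
  mono' := fun F G h => Real.toNNReal_mono (lam_mono U ν hν h)
  sup_disjoint' := by
    intro F G hd _ _
    have hle := lam_union_le U ν hν F.1 G.1
    have hge := lam_union_disjoint U ν hν F.2 G.2 hd
    have heq : lam U ν (F.1 ∪ G.1) = lam U ν F.1 + lam U ν G.1 := le_antisymm hle hge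
    show Real.toNNReal (lam U ν (F.1 ∪ G.1))
        = Real.toNNReal (lam U ν F.1) + Real.toNNReal (lam U ν G.1)
    rw [heq, Real.toNNReal_add (lam_nonneg U ν hν _) (lam_nonneg U ν hν _)]
  sup_le' := by
    intro F G
    have hle := lam_union_le U ν hν F.1 G.1
    show Real.toNNReal (lam U ν (F.1 ∪ G.1))
        ≤ Real.toNNReal (lam U ν F.1) + Real.toNNReal (lam U ν G.1)
    calc Real.toNNReal (lam U ν (F.1 ∪ G.1))
        ≤ Real.toNNReal (lam U ν F.1 + lam U ν G.1) := Real.toNNReal_mono hle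
      _ = Real.toNNReal (lam U ν F.1) + Real.toNNReal (lam U ν G.1) :=
          Real.toNNReal_add (lam_nonneg U ν hν _) (lam_nonneg U ν hν _)

/-- the limiting measure -/
def limMeas : Measure X := (limCont U ν hν).measure

lemma limMeas_open_le {V : Set X} (hV : IsOpen V) :
    limMeas U ν hν V ≤ ENNReal.ofReal (lo U ν V) := by
  rw [limMeas, Content.measure_apply _ hV.measurableSet,
    Content.outerMeasure_of_isOpen _ V hV]
  refine iSup_le fun K => iSup_le fun hK => ?_
  have h1 : lam U ν K.1 ≤ lo U ν V := lam_le_lo U ν hν hV hK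
  calc ((limCont U ν hν) K : ENNReal) = (Real.toNNReal (lam U ν K.1) : ENNReal) := rfl
    _ ≤ ENNReal.ofReal (lo U ν V) := by
        rw [ENNReal.ofReal]
        exact_mod_cast Real.toNNReal_mono h1

lemma limMeas_univ : limMeas U ν hν univ = 1 := by
  refine le_antisymm ?_ ?_
  · have := limMeas_open_le U ν hν isOpen_univ
    rwa [lo_univ U ν hν, ENNReal.ofReal_one] at this
  · rw [limMeas, Content.measure_apply _ MeasurableSet.univ,
      Content.outerMeasure_of_isOpen _ univ isOpen_univ]
    have huniv : lam U ν (univ : Set X) = 1 := by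
      have : {V : Set X | IsOpen V ∧ univ ⊆ V} = {univ} := by
        ext V
        simp only [mem_setOf_eq, mem_singleton_iff, univ_subset_iff]
        constructor
        · rintro ⟨_, h⟩; exact h
        · rintro rfl; exact ⟨isOpen_univ, rfl⟩
      rw [lam, this, image_singleton, csInf_singleton, lo_univ U ν hν]
    refine le_trans ?_ (le_iSup₂ (⟨univ, isCompact_univ⟩ : TopologicalSpace.Compacts X)
      (subset_rfl : ((⟨univ, isCompact_univ⟩ : TopologicalSpace.Compacts X) : Set X) ⊆ univ))
    show (1:ENNReal) ≤ ((Real.toNNReal (lam U ν univ) : ENNReal))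
    rw [huniv]
    simp

instance limMeas_prob : IsProbabilityMeasure (limMeas U ν hν) := ⟨limMeas_univ U ν hν⟩

lemma limMeas_open_le_real {V : Set X} (hV : IsOpen V) :
    ((limMeas U ν hν) V).toReal ≤ lo U ν V :=
  ENNReal.toReal_le_of_le_ofReal (lo_nonneg U ν hν V) (limMeas_open_le U ν hν hV)


/-- the ultrafilter limit of the integrals -/
def Ilim (f : X → ℝ) : ℝ := limUnder U (fun n => ∫ x, f x ∂(ν n))

lemma tendsto_Ilim {f : X → ℝ} (hf : Continuous f) :
    Tendsto (fun n => ∫ x, f x ∂(ν n)) U (nhds (Ilim U ν f)) := by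
  obtain ⟨z, _, hz⟩ := isCompact_univ.exists_isMaxOn univ_nonempty
    (continuous_abs.comp hf).continuousOn
  refine tendsto_nhds_limUnder (exists_ulim U (c := -|f z|) (C := |f z|) fun n => ?_)
  haveI := hν n
  have hb : ‖∫ x, f x ∂(ν n)‖ ≤ |f z| * ((ν n) univ).toReal :=
    norm_integral_le_of_norm_le_const (Filter.Eventually.of_forall fun a => hz (mem_univ a))
  rw [measure_univ] at hb
  simp only [ENNReal.toReal_one, mul_one] at hb
  rw [Real.norm_eq_abs, abs_le] at hb
  exact ⟨hb.1, hb.2⟩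

lemma integral_limMeas_le_Ilim {f : X → ℝ} (hf : Continuous f) (hf0 : ∀ x, 0 ≤ f x) :
    ∫ x, f x ∂(limMeas U ν hν) ≤ Ilim U ν f := by
  haveI := limMeas_prob U ν hν
  obtain ⟨z, _, hz⟩ := isCompact_univ.exists_isMaxOn univ_nonempty hf.continuousOn
  set Cf := f z with hCf
  have hCf0 : 0 ≤ Cf := hf0 z
  refine le_of_forall_pos_le_add fun δ hδ => ?_
  set N : ℕ := ⌈Cf/δ⌉₊ + 1 with hN
  have hbound : ∀ x, f x ≤ N * δ := by
    intro x
    have h1 : Cf / δ ≤ (⌈Cf/δ⌉₊ : ℝ) := Nat.le_ceil _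
    have h2 : Cf ≤ (⌈Cf/δ⌉₊ : ℝ) * δ := by
      rw [div_le_iff₀ hδ] at h1; linarith
    have h3 : ((⌈Cf/δ⌉₊ : ℝ)) * δ ≤ (N:ℝ) * δ := by
      have : ((⌈Cf/δ⌉₊:ℕ):ℝ) ≤ (N:ℝ) := by exact_mod_cast Nat.le_succ _
      nlinarith
    exact (hz (mem_univ x)).trans (h2.trans h3)
  have step1 : ∫ x, f x ∂(limMeas U ν hν)
      ≤ δ * ∑ k ∈ Finset.range N, ((limMeas U ν hν) {x | (k:ℝ)*δ < f x}).toReal :=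
    integral_le_staircase _ (integrable_of_cont _ hf) hf hf0 hδ hbound
  have step2 : δ * ∑ k ∈ Finset.range N, ((limMeas U ν hν) {x | (k:ℝ)*δ < f x}).toReal
      ≤ δ * ∑ k ∈ Finset.range N, lo U ν {x | (k:ℝ)*δ < f x} := by
    refine mul_le_mul_of_nonneg_left (Finset.sum_le_sum fun k _ => ?_) hδ.le
    exact limMeas_open_le_real U ν hν (isOpen_lt continuous_const hf)
  -- the finite sum of lo's is an ultrafilter limit
  have step3 : Tendsto (fun n => δ * ∑ k ∈ Finset.range N, mval ν {x | (k:ℝ)*δ < f x} n) U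
      (nhds (δ * ∑ k ∈ Finset.range N, lo U ν {x | (k:ℝ)*δ < f x})) := by
    refine Tendsto.const_mul δ ?_
    exact tendsto_finset_sum _ (fun k _ => tendsto_lo U ν hν _)
  have step4 : ∀ n, δ * ∑ k ∈ Finset.range N, mval ν {x | (k:ℝ)*δ < f x} n
      ≤ ∫ x, f x ∂(ν n) + δ := by
    intro n
    haveI := hν n
    have hlow : δ * ∑ k ∈ Finset.range N, (ν n {x | ((k:ℝ)+1)*δ < f x}).toReal
        ≤ ∫ x, f x ∂(ν n) :=
      staircase_le_integral _ (integrable_of_cont _ hf) hf hf0 hδ N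
    have hshift : ∑ k ∈ Finset.range N, mval ν {x | (k:ℝ)*δ < f x} n
        ≤ 1 + ∑ k ∈ Finset.range N, (ν n {x | ((k:ℝ)+1)*δ < f x}).toReal := by
      rw [hN, Finset.sum_range_succ' (fun k => mval ν {x | (k:ℝ)*δ < f x} n)]
      have e1 : ∀ k : ℕ, mval ν {x | ((k+1:ℕ):ℝ)*δ < f x} n
          = (ν n {x | ((k:ℝ)+1)*δ < f x}).toReal := by
        intro k
        have : (((k+1:ℕ)):ℝ) = (k:ℝ)+1 := by push_cast; ring
        rw [mval, this]
      have e2 : mval ν {x | ((0:ℕ):ℝ)*δ < f x} n ≤ 1 :=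
        (mval_mem ν hν _ n).2
      have e3 : ∑ k ∈ Finset.range ⌈Cf/δ⌉₊, mval ν {x | (((k+1:ℕ)):ℝ)*δ < f x} n
          ≤ ∑ k ∈ Finset.range (⌈Cf/δ⌉₊+1), (ν n {x | ((k:ℝ)+1)*δ < f x}).toReal := by
        rw [Finset.sum_congr rfl (fun k _ => e1 k)]
        refine Finset.sum_le_sum_of_subset_of_nonneg
          (Finset.range_subset_range.mpr (Nat.le_succ _)) ?_
        intro k _ _
        exact ENNReal.toReal_nonneg
      have := add_le_add e3 e2
      linarith
    have : δ * ∑ k ∈ Finset.range N, mval ν {x | (k:ℝ)*δ < f x} n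
        ≤ δ * (1 + ∑ k ∈ Finset.range N, (ν n {x | ((k:ℝ)+1)*δ < f x}).toReal) :=
      mul_le_mul_of_nonneg_left hshift hδ.le
    rw [mul_add, mul_one] at this
    linarith
  have step5 : δ * ∑ k ∈ Finset.range N, lo U ν {x | (k:ℝ)*δ < f x} ≤ Ilim U ν f + δ := by
    refine le_of_tendsto_of_tendsto' step3 ((tendsto_Ilim U ν hν hf).add_const δ) step4
  linarith [step1.trans step2, step5]

lemma tendsto_integral_limMeas {f : X → ℝ} (hf : Continuous f) :
    Tendsto (fun n => ∫ x, f x ∂(ν n)) U (nhds (∫ x, f x ∂(limMeas U ν hν))) := by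
  haveI := limMeas_prob U ν hν
  obtain ⟨z1, _, hz1⟩ := isCompact_univ.exists_isMinOn univ_nonempty hf.continuousOn
  obtain ⟨z2, _, hz2⟩ := isCompact_univ.exists_isMaxOn univ_nonempty hf.continuousOn
  set c := f z1
  set Cf := f z2
  set g : X → ℝ := fun x => f x - c with hg
  set gbar : X → ℝ := fun x => Cf - f x with hgbar
  have hgc : Continuous g := hf.sub continuous_const
  have hgbarc : Continuous gbar := continuous_const.sub hf
  have hg0 : ∀ x, 0 ≤ g x := fun x => by
    simp only [hg, sub_nonneg]; exact hz1 (mem_univ x)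
  have hgbar0 : ∀ x, 0 ≤ gbar x := fun x => by
    simp only [hgbar, sub_nonneg]; exact hz2 (mem_univ x)
  have hintf : ∀ (m : Measure X) [IsProbabilityMeasure m], ∫ x, g x ∂m = ∫ x, f x ∂m - c := by
    intro m hm
    rw [hg]
    rw [integral_sub (integrable_of_cont _ hf) (integrable_const c), integral_const]
    simp [measure_univ]
  have hintfbar : ∀ (m : Measure X) [IsProbabilityMeasure m],
      ∫ x, gbar x ∂m = Cf - ∫ x, f x ∂m := by
    intro m hm
    rw [hgbar]
    rw [integral_sub (integrable_const Cf) (integrable_of_cont _ hf), integral_const]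
    simp [measure_univ]
  -- limits
  have h1 : Tendsto (fun n => ∫ x, g x ∂(ν n)) U (nhds (Ilim U ν g)) := tendsto_Ilim U ν hν hgc
  have h2 : Tendsto (fun n => ∫ x, gbar x ∂(ν n)) U (nhds (Ilim U ν gbar)) :=
    tendsto_Ilim U ν hν hgbarc
  have e1 : ∀ n, ∫ x, g x ∂(ν n) = ∫ x, f x ∂(ν n) - c := fun n => by
    haveI := hν n; exact hintf (ν n)
  have e2 : ∀ n, ∫ x, gbar x ∂(ν n) = Cf - ∫ x, f x ∂(ν n) := fun n => by
    haveI := hν n; exact hintfbar (ν n)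
  have h1' : Tendsto (fun n => ∫ x, f x ∂(ν n)) U (nhds (Ilim U ν g + c)) := by
    have := h1.add_const c
    simp only [e1] at this
    simpa using this
  have h2' : Tendsto (fun n => ∫ x, f x ∂(ν n)) U (nhds (Cf - Ilim U ν gbar)) := by
    have := h2.const_sub Cf
    simp only [e2] at this
    simpa using this
  have heq : Ilim U ν g + c = Cf - Ilim U ν gbar := tendsto_nhds_unique h1' h2'
  have k1 : ∫ x, g x ∂(limMeas U ν hν) ≤ Ilim U ν g := integral_limMeas_le_Ilim U ν hν hgc hg0
  have k2 : ∫ x, gbar x ∂(limMeas U ν hν) ≤ Ilim U ν gbar :=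
    integral_limMeas_le_Ilim U ν hν hgbarc hgbar0
  rw [hintf (limMeas U ν hν)] at k1
  rw [hintfbar (limMeas U ν hν)] at k2
  have : Ilim U ν g + c = ∫ x, f x ∂(limMeas U ν hν) := by linarith
  rwa [this] at h1'

lemma tendsto_double_integral_limMeas {F : X × X → ℝ} (hF : Continuous F) :
    Tendsto (fun n => ∫ x, ∫ y, F (x, y) ∂(ν n) ∂(ν n)) U
      (nhds (∫ x, ∫ y, F (x, y) ∂(limMeas U ν hν) ∂(limMeas U ν hν))) := by
  haveI := limMeas_prob U ν hν
  set μ := limMeas U ν hν with hμ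
  -- modulus of continuity in the first variable
  have hmod : ∀ ε : ℝ, 0 < ε → ∃ δ : ℝ, 0 < δ ∧ ∀ x x' y : X, dist x x' < δ →
      |F (x, y) - F (x', y)| ≤ ε := by
    intro ε hε
    have huc := CompactSpace.uniformContinuous_of_continuous hF
    rw [Metric.uniformContinuous_iff] at huc
    obtain ⟨δ, hδ, hd⟩ := huc ε hε
    refine ⟨δ, hδ, fun x x' y hxx' => ?_⟩
    have : dist ((x, y) : X × X) ((x', y) : X × X) < δ := by
      rw [Prod.dist_eq]
      simp only [dist_self]
      rw [max_eq_left dist_nonneg]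
      exact hxx'
    have := hd this
    rw [Real.dist_eq] at this
    exact this.le
  -- the averaged functions
  set g : Measure X → X → ℝ := fun m x => ∫ y, F (x, y) ∂m with hgdef
  have hginner : ∀ x : X, Continuous (fun y => F (x, y)) := fun x =>
    hF.comp (continuous_const.prodMk continuous_id)
  have hgdiff : ∀ (m : Measure X) [IsProbabilityMeasure m], ∀ (ε δ : ℝ), 0 < ε →
      (∀ x x' y : X, dist x x' < δ → |F (x, y) - F (x', y)| ≤ ε) →
      ∀ x x' : X, dist x x' < δ → |g m x - g m x'| ≤ ε := by
    intro m hm ε δ hε hd x x' hxx'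
    have hsub : g m x - g m x' = ∫ y, (F (x, y) - F (x', y)) ∂m := by
      rw [hgdef]
      exact (integral_sub (integrable_of_cont _ (hginner x))
        (integrable_of_cont _ (hginner x'))).symm
    rw [hsub]
    have := norm_integral_le_of_norm_le_const (μ := m)
      (f := fun y => F (x, y) - F (x', y)) (C := ε)
      (Filter.Eventually.of_forall fun y => by
        rw [Real.norm_eq_abs]; exact hd x x' y hxx')
    rw [probReal_univ] at this
    simpa using this
  have hgcont : ∀ (m : Measure X) [IsProbabilityMeasure m], Continuous (g m) := by
    intro m hm
    rw [Metric.continuous_iff]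
    intro x ε hε
    obtain ⟨δ, hδ, hd⟩ := hmod (ε/2) (half_pos hε)
    refine ⟨δ, hδ, fun x' hx' => ?_⟩
    have := hgdiff m (ε/2) δ (half_pos hε) hd x' x hx'
    rw [Real.dist_eq]
    linarith [abs_nonneg (g m x' - g m x)]
  -- main estimate
  rw [Metric.tendsto_nhds]
  intro ε hε
  have hε8 : 0 < ε/8 := by linarith
  obtain ⟨δ, hδ, hd⟩ := hmod (ε/8) hε8
  -- finite cover
  obtain ⟨t, ht⟩ := isCompact_univ.elim_finite_subcover (fun i : X => ball i δ)
    (fun i => isOpen_ball) (fun x _ => mem_iUnion.2 ⟨x, mem_ball_self hδ⟩)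
  -- eventual closeness at the centers
  have hev1 : ∀ᶠ n in (U : Filter ℕ), ∀ i ∈ t, |g (ν n) i - g μ i| < ε/8 := by
    rw [Filter.eventually_all_finset]
    intro i _
    have htend : Tendsto (fun n => g (ν n) i) U (nhds (g μ i)) :=
      tendsto_integral_limMeas U ν hν (hginner i)
    have := Metric.tendsto_nhds.mp htend (ε/8) hε8
    refine this.mono fun n hn => ?_
    rwa [Real.dist_eq] at hn
  have hev2 : ∀ᶠ n in (U : Filter ℕ), dist (∫ x, g μ x ∂(ν n)) (∫ x, g μ x ∂μ) < ε/8 :=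
    Metric.tendsto_nhds.mp (tendsto_integral_limMeas U ν hν (hgcont μ)) (ε/8) hε8
  filter_upwards [hev1, hev2] with n hn1 hn2
  haveI := hν n
  -- uniform bound on g (ν n) - g μ
  have hsup : ∀ x : X, |g (ν n) x - g μ x| ≤ 3*(ε/8) := by
    intro x
    obtain ⟨i, hit, hxi⟩ : ∃ i ∈ t, x ∈ ball i δ := by
      have := ht (mem_univ x)
      simpa using this
    have d1 : |g (ν n) x - g (ν n) i| ≤ ε/8 :=
      hgdiff (ν n) (ε/8) δ hε8 hd x i (mem_ball.mp hxi)
    have d2 : |g (ν n) i - g μ i| ≤ ε/8 := (hn1 i hit).le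
    have d3 : |g μ i - g μ x| ≤ ε/8 := by
      refine hgdiff μ (ε/8) δ hε8 hd i x ?_
      rw [dist_comm]
      exact mem_ball.mp hxi
    calc |g (ν n) x - g μ x|
        = |(g (ν n) x - g (ν n) i) + (g (ν n) i - g μ i) + (g μ i - g μ x)| := by ring_nf
      _ ≤ |g (ν n) x - g (ν n) i| + |g (ν n) i - g μ i| + |g μ i - g μ x| := abs_add_three _ _ _
      _ ≤ 3*(ε/8) := by linarith
  have hbnd : |∫ x, g (ν n) x ∂(ν n) - ∫ x, g μ x ∂(ν n)| ≤ 3*(ε/8) := by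
    rw [← integral_sub (integrable_of_cont _ (hgcont (ν n))) (integrable_of_cont _ (hgcont μ))]
    have := norm_integral_le_of_norm_le_const (μ := ν n)
      (f := fun x => g (ν n) x - g μ x) (C := 3*(ε/8))
      (Filter.Eventually.of_forall fun x => by rw [Real.norm_eq_abs]; exact hsup x)
    rw [probReal_univ] at this
    simpa using this
  rw [Real.dist_eq]
  rw [Real.dist_eq] at hn2
  have : ∫ x, ∫ y, F (x, y) ∂(ν n) ∂(ν n) = ∫ x, g (ν n) x ∂(ν n) := rfl
  rw [this]
  have : ∫ x, ∫ y, F (x, y) ∂μ ∂μ = ∫ x, g μ x ∂μ := rfl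
  rw [this]
  calc |∫ x, g (ν n) x ∂(ν n) - ∫ x, g μ x ∂μ|
      ≤ |∫ x, g (ν n) x ∂(ν n) - ∫ x, g μ x ∂(ν n)| + |∫ x, g μ x ∂(ν n) - ∫ x, g μ x ∂μ| := by
        have := abs_sub_abs_le_abs_sub (∫ x, g (ν n) x ∂(ν n)) (∫ x, g μ x ∂μ)
        exact abs_sub_le _ _ _
    _ ≤ 3*(ε/8) + ε/8 := add_le_add hbnd hn2.le
    _ < ε := by linarith

end Abstract


section Main

variable {d : ℕ}


/-- The energy functional. -/
def En (M : Set (EuclideanSpace ℝ (Fin d))) (W : (EuclideanSpace ℝ (Fin d)) → ℝ) (ε : ℝ) (ρ : Measure (EuclideanSpace ℝ (Fin d))) : ℝ :=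
  (1 / 2) * ∫ x, ∫ y, W (x - y) ∂ρ ∂ρ + (1 / ε) * ∫ x, infDist x M ^ 2 ∂ρ

lemma sq_norm_sub_le (x y : (EuclideanSpace ℝ (Fin d))) : ‖x - y‖^2 ≤ 2*‖x‖^2 + 2*‖y‖^2 := by
  have h := norm_sub_le x y
  have h4 : ‖x - y‖^2 ≤ (‖x‖ + ‖y‖)^2 := by
    apply pow_le_pow_left₀ (norm_nonneg _) h
  nlinarith [sq_nonneg (‖x‖ - ‖y‖)]

lemma integrable_dirac_sm {α : Type*} [MeasurableSpace α] {f : α → ℝ}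
    (hf : StronglyMeasurable f) (a : α) : Integrable f (Measure.dirac a) := by
  refine ⟨hf.aestronglyMeasurable, ?_⟩
  rw [HasFiniteIntegral]
  rw [lintegral_dirac' a (by exact hf.measurable.nnnorm.coe_nnreal_ennreal)]
  exact ENNReal.coe_lt_top

/-- integrability from a quadratic bound -/
lemma integrable_of_quad (ρ : Measure (EuclideanSpace ℝ (Fin d))) [IsFiniteMeasure ρ]
    (h2 : Integrable (fun x => ‖x‖^2) ρ) {f : (EuclideanSpace ℝ (Fin d)) → ℝ}
    (hf : AEStronglyMeasurable f ρ) {a b : ℝ} (hb : ∀ x, |f x| ≤ a + b*‖x‖^2) :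
    Integrable f ρ := by
  refine Integrable.mono' ((integrable_const a).add (h2.const_mul b)) hf
    (Filter.Eventually.of_forall fun x => ?_)
  rw [Real.norm_eq_abs]
  exact hb x

section WLemmas

variable {W : (EuclideanSpace ℝ (Fin d)) → ℝ} {C : ℝ} (hWc : Continuous W) (hW0 : ∀ x, 0 ≤ W x)
  (hC : ∀ x, W x ≤ C * (1 + ‖x‖ ^ 2))

include hW0 hC in
lemma C_nonneg : 0 ≤ C := le_trans (hW0 0) (by simpa using hC 0)

include hWc hW0 hC in
lemma integrable_W_slice (ρ : Measure (EuclideanSpace ℝ (Fin d))) [IsFiniteMeasure ρ]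
    (h2 : Integrable (fun x => ‖x‖^2) ρ) (x : (EuclideanSpace ℝ (Fin d))) :
    Integrable (fun y => W (x - y)) ρ := by
  have hC0 := C_nonneg hW0 hC
  have hcont : Continuous fun y => W (x - y) :=
    hWc.comp (continuous_const.sub continuous_id)
  refine integrable_of_quad ρ h2 hcont.aestronglyMeasurable
    (a := C + 2*C*‖x‖^2) (b := 2*C) fun y => ?_
  rw [abs_of_nonneg (hW0 _)]
  have h1 := hC (x - y)
  have h2 := sq_norm_sub_le x y
  nlinarith [norm_nonneg x, norm_nonneg y, mul_le_mul_of_nonneg_left h2 hC0]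

include hWc hW0 hC in
lemma integrable_W_slice' (ρ : Measure (EuclideanSpace ℝ (Fin d))) [IsFiniteMeasure ρ]
    (h2 : Integrable (fun x => ‖x‖^2) ρ) (x₀ : (EuclideanSpace ℝ (Fin d))) :
    Integrable (fun x => W (x - x₀)) ρ := by
  have hC0 := C_nonneg hW0 hC
  have hcont : Continuous fun x => W (x - x₀) :=
    hWc.comp (continuous_id.sub continuous_const)
  refine integrable_of_quad ρ h2 hcont.aestronglyMeasurable
    (a := C + 2*C*‖x₀‖^2) (b := 2*C) fun x => ?_
  rw [abs_of_nonneg (hW0 _)]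
  have h1 := hC (x - x₀)
  have h2 := sq_norm_sub_le x x₀
  nlinarith [norm_nonneg x, norm_nonneg x₀, mul_le_mul_of_nonneg_left h2 hC0]

include hWc in
lemma sm_W_inner (ρ' : Measure (EuclideanSpace ℝ (Fin d))) [SFinite ρ'] :
    StronglyMeasurable (fun x => ∫ y, W (x - y) ∂ρ') := by
  have hWsm : StronglyMeasurable (fun p : (EuclideanSpace ℝ (Fin d)) × (EuclideanSpace ℝ (Fin d)) => W (p.1 - p.2)) :=
    (hWc.comp (continuous_fst.sub continuous_snd)).stronglyMeasurable
  exact hWsm.integral_prod_right'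

include hWc hW0 hC in
lemma W_inner_bound (ρ' : Measure (EuclideanSpace ℝ (Fin d))) [IsFiniteMeasure ρ']
    (h2' : Integrable (fun x => ‖x‖^2) ρ') (x : (EuclideanSpace ℝ (Fin d))) :
    |∫ y, W (x - y) ∂ρ'| ≤ (C + 2*C*‖x‖^2) * (ρ' univ).toReal + 2*C*∫ y, ‖y‖^2 ∂ρ' := by
  have hC0 := C_nonneg hW0 hC
  have key : ∫ y, W (x - y) ∂ρ' ≤ (C + 2*C*‖x‖^2) * (ρ' univ).toReal + 2*C*∫ y, ‖y‖^2 ∂ρ' := by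
    have hmono : ∫ y, W (x - y) ∂ρ' ≤ ∫ y, ((C + 2*C*‖x‖^2) + (2*C)*‖y‖^2) ∂ρ' := by
      refine integral_mono (integrable_W_slice hWc hW0 hC ρ' h2' x)
        ((integrable_const _).add (h2'.const_mul _)) fun y => ?_
      have h1 := hC (x - y)
      have h2 := sq_norm_sub_le x y
      nlinarith [norm_nonneg x, norm_nonneg y, mul_le_mul_of_nonneg_left h2 hC0]
    rw [integral_add (integrable_const _) (h2'.const_mul _), integral_const,
      integral_const_mul] at hmono
    calc ∫ y, W (x - y) ∂ρ' ≤ (ρ' univ).toReal • (C + 2*C*‖x‖^2) + 2*C*∫ y, ‖y‖^2 ∂ρ' := hmono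
      _ = (C + 2*C*‖x‖^2) * (ρ' univ).toReal + 2*C*∫ y, ‖y‖^2 ∂ρ' := by
          rw [smul_eq_mul, mul_comm]
  have hpos : 0 ≤ ∫ y, W (x - y) ∂ρ' := integral_nonneg fun y => hW0 _
  rw [abs_of_nonneg hpos]
  exact key

include hWc hW0 hC in
lemma W_slice'_bound (ρ' : Measure (EuclideanSpace ℝ (Fin d))) [IsFiniteMeasure ρ']
    (h2' : Integrable (fun x => ‖x‖^2) ρ') (x₀ : EuclideanSpace ℝ (Fin d)) :
    |∫ x, W (x - x₀) ∂ρ'| ≤ (C + 2*C*‖x₀‖^2) * (ρ' univ).toReal + 2*C*∫ x, ‖x‖^2 ∂ρ' := by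
  have hC0 := C_nonneg hW0 hC
  have key : ∫ x, W (x - x₀) ∂ρ' ≤ ∫ x, ((C + 2*C*‖x₀‖^2) + (2*C)*‖x‖^2) ∂ρ' := by
    refine integral_mono (integrable_W_slice' hWc hW0 hC ρ' h2' x₀)
      ((integrable_const _).add (h2'.const_mul _)) fun x => ?_
    have h1 := hC (x - x₀)
    have h2 := sq_norm_sub_le x x₀
    nlinarith [norm_nonneg x, norm_nonneg x₀, mul_le_mul_of_nonneg_left h2 hC0]
  rw [integral_add (integrable_const _) (h2'.const_mul _), integral_const,
    integral_const_mul] at key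
  have hpos : 0 ≤ ∫ x, W (x - x₀) ∂ρ' := integral_nonneg fun x => hW0 _
  rw [abs_of_nonneg hpos]
  calc ∫ x, W (x - x₀) ∂ρ'
      ≤ (ρ' univ).toReal • (C + 2*C*‖x₀‖^2) + 2*C*∫ x, ‖x‖^2 ∂ρ' := key
    _ = (C + 2*C*‖x₀‖^2) * (ρ' univ).toReal + 2*C*∫ x, ‖x‖^2 ∂ρ' := by
        rw [smul_eq_mul, mul_comm]

include hWc hW0 hC in
lemma integrable_W_inner (ρ ρ' : Measure (EuclideanSpace ℝ (Fin d))) [IsFiniteMeasure ρ] [IsFiniteMeasure ρ']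
    (h2 : Integrable (fun x => ‖x‖^2) ρ) (h2' : Integrable (fun x => ‖x‖^2) ρ') :
    Integrable (fun x => ∫ y, W (x - y) ∂ρ') ρ := by
  have hC0 := C_nonneg hW0 hC
  refine integrable_of_quad ρ h2 (sm_W_inner hWc ρ').aestronglyMeasurable
    (a := C * (ρ' univ).toReal + 2*C*∫ y, ‖y‖^2 ∂ρ')
    (b := 2*C*(ρ' univ).toReal) fun x => ?_
  have := W_inner_bound hWc hW0 hC ρ' h2' x
  have h3 : ((ρ' : Measure (EuclideanSpace ℝ (Fin d))) univ).toReal ≤ (ρ' univ).toReal := le_rfl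
  nlinarith [ENNReal.toReal_nonneg (a := ρ' univ), norm_nonneg x, this]

end WLemmas

section VLemmas

variable {M : Set (EuclideanSpace ℝ (Fin d))} {D : ℝ} (hMne : M.Nonempty) (hD : M ⊆ closedBall 0 D)

lemma V_cont : Continuous (fun x : (EuclideanSpace ℝ (Fin d)) => infDist x M ^ 2) :=
  (continuous_infDist_pt M).pow 2

lemma V_nonneg (x : (EuclideanSpace ℝ (Fin d))) : 0 ≤ infDist x M ^ 2 := sq_nonneg _

include hD in
lemma V_upper (x₀ : (EuclideanSpace ℝ (Fin d))) (hx₀ : x₀ ∈ M) (x : (EuclideanSpace ℝ (Fin d))) : infDist x M ^ 2 ≤ 2*‖x‖^2 + 2*D^2 := by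
  have h1 : infDist x M ≤ dist x x₀ := infDist_le_dist_of_mem hx₀
  have h2 : dist x x₀ ≤ ‖x‖ + D := by
    have : ‖x₀‖ ≤ D := by
      have := hD hx₀
      rwa [mem_closedBall, dist_zero_right] at this
    calc dist x x₀ = ‖x - x₀‖ := dist_eq_norm x x₀
      _ ≤ ‖x‖ + ‖x₀‖ := norm_sub_le x x₀
      _ ≤ ‖x‖ + D := by linarith
  have h3 : 0 ≤ infDist x M := infDist_nonneg
  have h4 : infDist x M ^ 2 ≤ (‖x‖ + D)^2 := by
    apply pow_le_pow_left₀ h3 (h1.trans h2)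
  nlinarith [sq_nonneg (‖x‖ - D)]

include hMne hD in
lemma V_lower (x : (EuclideanSpace ℝ (Fin d))) : ‖x‖ - D ≤ infDist x M := by
  by_contra h
  push_neg at h
  obtain ⟨y, hyM, hlt⟩ := (infDist_lt_iff hMne).mp h
  have hy : ‖y‖ ≤ D := by
    have := hD hyM
    rwa [mem_closedBall, dist_zero_right] at this
  have : ‖x‖ - ‖y‖ ≤ dist x y := by
    rw [dist_eq_norm]
    have := norm_sub_norm_le x y
    linarith [le_abs_self (‖x‖ - ‖y‖)]
  linarith

include hD in
lemma integrable_V (x₀ : (EuclideanSpace ℝ (Fin d))) (hx₀ : x₀ ∈ M) (ρ : Measure (EuclideanSpace ℝ (Fin d))) [IsFiniteMeasure ρ]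
    (h2 : Integrable (fun x => ‖x‖^2) ρ) :
    Integrable (fun x => infDist x M ^ 2) ρ := by
  refine integrable_of_quad ρ h2 V_cont.aestronglyMeasurable
    (a := 2*D^2) (b := 2) fun x => ?_
  rw [abs_of_nonneg (V_nonneg x)]
  have := V_upper hD x₀ hx₀ x
  linarith

include hMne hD in
lemma norm_sq_le_V (x : (EuclideanSpace ℝ (Fin d))) : ‖x‖^2 ≤ 2 * infDist x M ^ 2 + 2*D^2 := by
  have h1 := V_lower hMne hD x
  have h2 : 0 ≤ infDist x M := infDist_nonneg
  have h3 := norm_nonneg x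
  nlinarith [sq_nonneg (‖x‖ - D), sq_nonneg D, sq_nonneg (infDist x M - D)]

end VLemmas

end Main


section Transport

variable {d : ℕ}

lemma transport_prob (ρ : Measure (EuclideanSpace ℝ (Fin d))) [IsProbabilityMeasure ρ]
    {R : ℝ} {x₀ : EuclideanSpace ℝ (Fin d)} :
    IsProbabilityMeasure (ρ.restrict (closedBall 0 R)
      + (ρ (closedBall 0 R)ᶜ) • Measure.dirac x₀) := by
  constructor
  rw [Measure.add_apply, Measure.restrict_apply_univ, Measure.smul_apply, smul_eq_mul]
  rw [Measure.dirac_apply' _ MeasurableSet.univ]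
  simp only [Set.indicator_of_mem (mem_univ x₀), Pi.one_apply, mul_one]
  rw [measure_add_measure_compl measurableSet_closedBall]
  exact measure_univ

lemma transport_sqint (ρ : Measure (EuclideanSpace ℝ (Fin d))) [IsProbabilityMeasure ρ]
    {R : ℝ} {x₀ : EuclideanSpace ℝ (Fin d)}
    (h2 : Integrable (fun x => ‖x‖^2) ρ) :
    Integrable (fun x => ‖x‖^2) (ρ.restrict (closedBall 0 R)
      + (ρ (closedBall 0 R)ᶜ) • Measure.dirac x₀) :=
  h2.restrict.add_measure
    ((integrable_dirac_sm ((continuous_norm.pow 2).stronglyMeasurable) x₀).smul_measure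
      (measure_ne_top ρ _))

lemma transport_compl_zero (ρ : Measure (EuclideanSpace ℝ (Fin d)))
    {R : ℝ} {x₀ : EuclideanSpace ℝ (Fin d)} (hx₀R : x₀ ∈ closedBall (0:EuclideanSpace ℝ (Fin d)) R) :
    (ρ.restrict (closedBall 0 R) + (ρ (closedBall 0 R)ᶜ) • Measure.dirac x₀)
      (closedBall 0 R)ᶜ = 0 := by
  rw [Measure.add_apply, Measure.restrict_apply measurableSet_closedBall.compl]
  rw [compl_inter_self, measure_empty, Measure.smul_apply, smul_eq_mul,
    Measure.dirac_apply' _ measurableSet_closedBall.compl]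
  rw [Set.indicator_of_notMem (by simpa using hx₀R)]
  simp

set_option maxHeartbeats 4000000 in
lemma transport_En_le {M : Set (EuclideanSpace ℝ (Fin d))} {W : EuclideanSpace ℝ (Fin d) → ℝ}
    {C D S R ε : ℝ} {x₀ : EuclideanSpace ℝ (Fin d)}
    (hWc : Continuous W) (hW0 : ∀ x, 0 ≤ W x) (hC : ∀ x, W x ≤ C * (1 + ‖x‖ ^ 2))
    (hMne : M.Nonempty) (hx₀ : x₀ ∈ M) (hD : M ⊆ closedBall 0 D)
    (hε : 0 < ε) (hS0 : 0 ≤ S) (hRD : D ≤ R)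
    (hgap : 2*C*(1+2*D^2+2*S) + W 0 ≤ 2*(R-D)^2 * (1/ε))
    (ρ : Measure (EuclideanSpace ℝ (Fin d))) [IsProbabilityMeasure ρ]
    (h2 : Integrable (fun x => ‖x‖^2) ρ) (hS : ∫ x, ‖x‖^2 ∂ρ ≤ S) :
    En M W ε (ρ.restrict (closedBall 0 R) + (ρ (closedBall 0 R)ᶜ) • Measure.dirac x₀)
      ≤ En M W ε ρ := by
  have hC0 := C_nonneg hW0 hC
  set B := closedBall (0 : EuclideanSpace ℝ (Fin d)) R with hB
  have hBm : MeasurableSet B := measurableSet_closedBall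
  set σ := ρ.restrict B with hσ
  set c := ρ Bᶜ with hc
  have hct : c ≠ ⊤ := measure_ne_top ρ _
  set t := c.toReal with ht
  have ht0 : 0 ≤ t := ENNReal.toReal_nonneg
  have ht1 : t ≤ 1 := by
    rw [ht]
    refine ENNReal.toReal_le_of_le_ofReal zero_le_one ?_
    rw [ENNReal.ofReal_one]
    exact prob_le_one
  have h2σ : Integrable (fun x => ‖x‖^2) σ := h2.restrict
  have hmσ : (σ univ).toReal ≤ 1 := by
    rw [hσ, Measure.restrict_apply_univ]
    refine ENNReal.toReal_le_of_le_ofReal zero_le_one ?_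
    rw [ENNReal.ofReal_one]
    exact prob_le_one
  have hmσ0 : 0 ≤ (σ univ).toReal := ENNReal.toReal_nonneg
  have hSσ0 : 0 ≤ ∫ y, ‖y‖^2 ∂σ := integral_nonneg fun y => sq_nonneg _
  have hSσ : ∫ y, ‖y‖^2 ∂σ ≤ S := by
    refine le_trans ?_ hS
    exact integral_mono_measure Measure.restrict_le_self
      (Filter.Eventually.of_forall fun y => sq_nonneg _) h2
  set g : EuclideanSpace ℝ (Fin d) → ℝ := fun x => ∫ y, W (x - y) ∂σ with hg
  set gρ : EuclideanSpace ℝ (Fin d) → ℝ := fun x => ∫ y, W (x - y) ∂ρ with hgρ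
  have hsliceσ : ∀ x, Integrable (fun y => W (x - y)) σ :=
    integrable_W_slice hWc hW0 hC σ h2σ
  have hsliceρ : ∀ x, Integrable (fun y => W (x - y)) ρ :=
    integrable_W_slice hWc hW0 hC ρ h2
  have hgσint : Integrable g σ := integrable_W_inner hWc hW0 hC σ σ h2σ h2σ
  have hgρint : Integrable gρ ρ := integrable_W_inner hWc hW0 hC ρ ρ h2 h2
  have hgρintσ : Integrable gρ σ := hgρint.mono_measure Measure.restrict_le_self
  have hWx₀int : Integrable (fun x => W (x - x₀)) σ :=
    integrable_W_slice' hWc hW0 hC σ h2σ x₀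
  have hsm_slice : ∀ x : EuclideanSpace ℝ (Fin d),
      StronglyMeasurable (fun y : EuclideanSpace ℝ (Fin d) => W (x - y)) := fun x =>
    (hWc.comp (continuous_const.sub continuous_id)).stronglyMeasurable
  have hdsl : ∀ x, Integrable (fun y => W (x - y)) (c • Measure.dirac x₀) := fun x =>
    (integrable_dirac_sm (hsm_slice x) x₀).smul_measure hct
  have hinner : ∀ x, ∫ y, W (x - y) ∂(σ + c • Measure.dirac x₀) = g x + t * W (x - x₀) := by
    intro x
    rw [integral_add_measure (hsliceσ x) (hdsl x), integral_smul_measure, integral_dirac]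
    rw [smul_eq_mul]
  set f : EuclideanSpace ℝ (Fin d) → ℝ := fun x => g x + t * W (x - x₀) with hf
  have hfintσ : Integrable f σ := hgσint.add (hWx₀int.const_mul t)
  have hfsm : StronglyMeasurable f :=
    (sm_W_inner hWc σ).add
      (((hWc.comp (continuous_id.sub continuous_const)).stronglyMeasurable).const_mul t)
  have hfdirac : Integrable f (c • Measure.dirac x₀) :=
    (integrable_dirac_sm hfsm x₀).smul_measure hct
  have houter : ∫ x, ∫ y, W (x - y) ∂(σ + c • Measure.dirac x₀) ∂(σ + c • Measure.dirac x₀)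
      = (∫ x, g x ∂σ + t * ∫ x, W (x - x₀) ∂σ) + t * (g x₀ + t * W 0) := by
    have e1 : ∫ x, ∫ y, W (x - y) ∂(σ + c • Measure.dirac x₀) ∂(σ + c • Measure.dirac x₀)
        = ∫ x, f x ∂(σ + c • Measure.dirac x₀) := integral_congr_ae (ae_of_all _ hinner)
    rw [e1, integral_add_measure hfintσ hfdirac, integral_smul_measure, integral_dirac,
      integral_add hgσint (hWx₀int.const_mul t), integral_const_mul]
    rw [smul_eq_mul, hf]
    simp only [sub_self]
    rfl
  have hmonoJ : ∫ x, g x ∂σ ≤ ∫ x, ∫ y, W (x - y) ∂ρ ∂ρ := by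
    have hin : ∀ x, g x ≤ gρ x := fun x =>
      integral_mono_measure Measure.restrict_le_self
        (Filter.Eventually.of_forall fun y => hW0 _) (hsliceρ x)
    calc ∫ x, g x ∂σ ≤ ∫ x, gρ x ∂σ := integral_mono hgσint hgρintσ hin
      _ ≤ ∫ x, gρ x ∂ρ := integral_mono_measure Measure.restrict_le_self
          (Filter.Eventually.of_forall fun x => integral_nonneg fun y => hW0 _) hgρint
  have hx₀D : ‖x₀‖ ≤ D := by
    have := hD hx₀
    rwa [mem_closedBall, dist_zero_right] at this
  have hx₀D2 : ‖x₀‖^2 ≤ D^2 := pow_le_pow_left₀ (norm_nonneg x₀) hx₀D 2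
  have hD20 : (0:ℝ) ≤ D^2 := sq_nonneg D
  have hcross1 : ∫ x, W (x - x₀) ∂σ ≤ C*(1+2*D^2+2*S) := by
    have hb := le_of_abs_le (W_slice'_bound hWc hW0 hC σ h2σ x₀)
    have h1' : C + 2*C*‖x₀‖^2 ≤ C + 2*C*D^2 := by
      nlinarith [mul_le_mul_of_nonneg_left hx₀D2 hC0]
    have h2' : (C + 2*C*‖x₀‖^2) * (σ univ).toReal ≤ (C + 2*C*D^2) * 1 :=
      mul_le_mul h1' hmσ hmσ0 (by positivity)
    have h3' : 2*C*∫ y, ‖y‖^2 ∂σ ≤ 2*C*S :=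
      mul_le_mul_of_nonneg_left hSσ (by positivity)
    nlinarith
  have hcross2 : g x₀ ≤ C*(1+2*D^2+2*S) := by
    have hb := le_of_abs_le (W_inner_bound hWc hW0 hC σ h2σ x₀)
    have h1' : C + 2*C*‖x₀‖^2 ≤ C + 2*C*D^2 := by
      nlinarith [mul_le_mul_of_nonneg_left hx₀D2 hC0]
    have h2' : (C + 2*C*‖x₀‖^2) * (σ univ).toReal ≤ (C + 2*C*D^2) * 1 :=
      mul_le_mul h1' hmσ hmσ0 (by positivity)
    have h3' : 2*C*∫ y, ‖y‖^2 ∂σ ≤ 2*C*S :=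
      mul_le_mul_of_nonneg_left hSσ (by positivity)
    nlinarith
  -- confinement term
  have hVint : Integrable (fun x => infDist x M ^ 2) ρ := integrable_V hD x₀ hx₀ ρ h2
  have hVσ : Integrable (fun x => infDist x M ^ 2) σ := hVint.restrict
  have hVτ : Integrable (fun x => infDist x M ^ 2) (ρ.restrict Bᶜ) := hVint.restrict
  have hVsplit : ∫ x, infDist x M ^ 2 ∂ρ
      = ∫ x, infDist x M ^ 2 ∂σ + ∫ x, infDist x M ^ 2 ∂(ρ.restrict Bᶜ) := by
    conv_lhs => rw [← Measure.restrict_add_restrict_compl (μ := ρ) hBm]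
    exact integral_add_measure hVσ hVτ
  have hVtail : (R - D)^2 * t ≤ ∫ x, infDist x M ^ 2 ∂(ρ.restrict Bᶜ) := by
    have hae : ∀ᵐ x ∂(ρ.restrict Bᶜ), (R-D)^2 ≤ infDist x M ^ 2 := by
      filter_upwards [ae_restrict_mem hBm.compl] with x hx
      have hxR : R < ‖x‖ := by
        simp only [hB, mem_compl_iff, mem_closedBall, dist_zero_right, not_le] at hx
        exact hx
      have h1 := V_lower hMne hD x
      have hle : R - D ≤ infDist x M := by linarith
      have h0 : (0:ℝ) ≤ R - D := by linarith
      exact pow_le_pow_left₀ h0 hle 2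
    have hmono := integral_mono_ae (integrable_const ((R-D)^2)) hVτ hae
    rw [integral_const, measureReal_restrict_apply_univ, smul_eq_mul, mul_comm] at hmono
    exact hmono
  have hVdirac : ∫ x, infDist x M ^ 2 ∂(c • Measure.dirac x₀) = 0 := by
    rw [integral_smul_measure, integral_dirac, infDist_zero_of_mem hx₀]
    simp
  have hVT : ∫ x, infDist x M ^ 2 ∂(σ + c • Measure.dirac x₀)
      = ∫ x, infDist x M ^ 2 ∂σ := by
    rw [integral_add_measure hVσ
      ((integrable_dirac_sm V_cont.stronglyMeasurable x₀).smul_measure hct), hVdirac, add_zero]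
  -- combine
  have hW00 : 0 ≤ W 0 := hW0 0
  have hVτ0 := hVtail
  have hεinv : 0 < 1/ε := by positivity
  simp only [En]
  rw [houter, hVT, hVsplit]
  have htt : t*t ≤ t := mul_le_of_le_one_left ht0 ht1
  nlinarith [mul_le_mul_of_nonneg_left hcross1 ht0,
    mul_le_mul_of_nonneg_left hcross2 ht0,
    mul_le_mul_of_nonneg_right htt hW00,
    mul_le_mul_of_nonneg_left hgap ht0,
    mul_le_mul_of_nonneg_left hVtail hεinv.le,
    mul_pos hεinv (mul_pos hεinv hεinv)]

end Transport


end Stmt5Proof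

open Filter Set Stmt5Proof in
set_option maxHeartbeats 2000000 in
/-- For every ε > 0 the functional
E_ε(ρ) = (1/2)∬ W(x−y) dρ dρ + (1/ε)∫ d_M² dρ attains its minimum on P₂(ℝ^d). -/
theorem stmt5 {d : ℕ} (M : Set (EuclideanSpace ℝ (Fin d))) (hMne : M.Nonempty)
    (hMc : IsCompact M)
    (W : EuclideanSpace ℝ (Fin d) → ℝ) (hWc : Continuous W) (hW0 : ∀ x, 0 ≤ W x)
    (hWgrowth : ∃ C, ∀ x, W x ≤ C * (1 + ‖x‖ ^ 2))
    (ε : ℝ) (hε : 0 < ε) :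
    ∃ ρstar : Measure (EuclideanSpace ℝ (Fin d)),
      IsProbabilityMeasure ρstar ∧ Integrable (fun x => ‖x‖ ^ 2) ρstar ∧
      ∀ ρ : Measure (EuclideanSpace ℝ (Fin d)),
        IsProbabilityMeasure ρ → Integrable (fun x => ‖x‖ ^ 2) ρ →
        (1 / 2) * ∫ x, ∫ y, W (x - y) ∂ρstar ∂ρstar
            + (1 / ε) * ∫ x, infDist x M ^ 2 ∂ρstar
          ≤ (1 / 2) * ∫ x, ∫ y, W (x - y) ∂ρ ∂ρ
            + (1 / ε) * ∫ x, infDist x M ^ 2 ∂ρ := by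
  classical
  obtain ⟨C, hC⟩ := hWgrowth
  have hC0 : 0 ≤ C := C_nonneg hW0 hC
  obtain ⟨x₀, hx₀⟩ := hMne
  obtain ⟨D₀, hD₀⟩ := hMc.isBounded.subset_closedBall 0
  set D := max D₀ 0 with hDdef
  have hD : M ⊆ closedBall 0 D :=
    hD₀.trans (closedBall_subset_closedBall (le_max_left _ _))
  have hD0 : 0 ≤ D := le_max_right _ _
  have hMne' : M.Nonempty := ⟨x₀, hx₀⟩
  -- admissible measures and the infimum of the energy
  set Adm : Set (Measure (EuclideanSpace ℝ (Fin d))) :=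
    {ρ | IsProbabilityMeasure ρ ∧ Integrable (fun x => ‖x‖ ^ 2) ρ} with hAdm
  set vals : Set ℝ := En M W ε '' Adm with hvals
  have hnormsq_cont : Continuous (fun x : EuclideanSpace ℝ (Fin d) => ‖x‖^2) :=
    continuous_norm.pow 2
  have hdirac_mem : Measure.dirac x₀ ∈ Adm := by
    refine ⟨⟨by simp⟩, integrable_dirac_sm hnormsq_cont.stronglyMeasurable x₀⟩
  have hvne : vals.Nonempty := ⟨_, ⟨Measure.dirac x₀, hdirac_mem, rfl⟩⟩
  have hEnonneg : ∀ ρ ∈ Adm, 0 ≤ En M W ε ρ := by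
    rintro ρ ⟨h1, h2⟩
    have ha : 0 ≤ ∫ x, ∫ y, W (x - y) ∂ρ ∂ρ :=
      integral_nonneg fun x => integral_nonneg fun y => hW0 _
    have hb : 0 ≤ ∫ x, infDist x M ^ 2 ∂ρ := integral_nonneg fun x => sq_nonneg _
    have hεi : (0:ℝ) < 1/ε := by positivity
    simp only [En]
    nlinarith
  have hbdd : BddBelow vals := ⟨0, by rintro v ⟨ρ, hρ, rfl⟩; exact hEnonneg ρ hρ⟩
  set m := sInf vals with hm
  have hm0 : 0 ≤ m :=
    le_csInf hvne (by rintro v ⟨ρ, hρ, rfl⟩; exact hEnonneg ρ hρ)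
  have hm_le : ∀ ρ ∈ Adm, m ≤ En M W ε ρ := fun ρ hρ => csInf_le hbdd ⟨ρ, hρ, rfl⟩
  -- minimizing sequence
  have hseq : ∀ n : ℕ, ∃ ρ ∈ Adm, En M W ε ρ < m + 1/((n:ℝ)+1) := by
    intro n
    obtain ⟨v, hv, hlt⟩ := Real.lt_sInf_add_pos hvne (ε := 1/((n:ℝ)+1)) (by positivity)
    obtain ⟨ρ, hρ, rfl⟩ := hv
    exact ⟨ρ, hρ, hlt⟩
  choose ρseq hρseq hEρseq using hseq
  -- uniform second moment bound
  set S := 2*ε*(m+1) + 2*D^2 with hS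
  have hS0 : 0 ≤ S := by nlinarith [sq_nonneg D]
  have hmom : ∀ n, ∫ x, ‖x‖^2 ∂(ρseq n) ≤ S := by
    intro n
    obtain ⟨hp, h2⟩ := hρseq n
    haveI := hp
    have hVint : Integrable (fun x => infDist x M ^ 2) (ρseq n) :=
      integrable_V hD x₀ hx₀ _ h2
    set a := ∫ x, ∫ y, W (x - y) ∂(ρseq n) ∂(ρseq n) with hadef
    set b := ∫ x, infDist x M ^ 2 ∂(ρseq n) with hbdef
    have ha : 0 ≤ a := integral_nonneg fun x => integral_nonneg fun y => hW0 _
    have hVE : b ≤ ε * En M W ε (ρseq n) := by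
      have he : ε * ((1/2)*a + (1/ε)*b) = ε/2 * a + b := by
        field_simp
      simp only [En, ← hadef, ← hbdef]
      rw [he]
      nlinarith
    have hEb : En M W ε (ρseq n) ≤ m + 1 := by
      have h1 := hEρseq n
      have h1n : 1/((n:ℝ)+1) ≤ 1 := by
        rw [div_le_one (by positivity)]
        linarith [show (0:ℝ) ≤ (n:ℝ) from Nat.cast_nonneg n]
      linarith
    have hpt : ∀ x, ‖x‖^2 ≤ 2 * infDist x M ^ 2 + 2*D^2 := norm_sq_le_V hMne' hD
    have hmono : ∫ x, ‖x‖^2 ∂(ρseq n)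
        ≤ ∫ x, (2 * infDist x M ^ 2 + 2*D^2) ∂(ρseq n) :=
      integral_mono h2 ((hVint.const_mul 2).add (integrable_const _)) hpt
    rw [integral_add (hVint.const_mul 2) (integrable_const _), integral_const_mul,
      integral_const, probReal_univ] at hmono
    simp only [ENNReal.toReal_one, one_smul] at hmono
    have hεE : ε * En M W ε (ρseq n) ≤ ε * (m+1) :=
      mul_le_mul_of_nonneg_left hEb hε.le
    simp only [hS]
    simp only [← hbdef] at hmono
    nlinarith
  -- the radius for truncation
  set K := 2*C*(1+2*D^2+2*S) + W 0 with hK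
  have hK0 : 0 ≤ K := by
    have h1 : (0:ℝ) ≤ 1+2*D^2+2*S := by nlinarith [sq_nonneg D]
    nlinarith [hW0 0, mul_nonneg hC0 h1]
  set R := D + Real.sqrt (ε*K/2) + 1 with hR
  have hsq : Real.sqrt (ε*K/2) ^ 2 = ε*K/2 := Real.sq_sqrt (by positivity)
  have hsqnn : 0 ≤ Real.sqrt (ε*K/2) := Real.sqrt_nonneg _
  have hRD : D ≤ R := by rw [hR]; linarith
  have hgap : K ≤ 2*(R-D)^2 * (1/ε) := by
    have h2 : ε*K/2 ≤ (R-D)^2 := by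
      have h1 : R - D = Real.sqrt (ε*K/2) + 1 := by rw [hR]; ring
      rw [h1]
      nlinarith
    nlinarith [mul_le_mul_of_nonneg_right h2 (by positivity : (0:ℝ) ≤ 1/ε),
      mul_one_div_cancel hε.ne']
  -- the truncated sequence
  set B := closedBall (0 : EuclideanSpace ℝ (Fin d)) R with hBdef
  have hBm : MeasurableSet B := measurableSet_closedBall
  set T : ℕ → Measure (EuclideanSpace ℝ (Fin d)) := fun n =>
    (ρseq n).restrict B + ((ρseq n) Bᶜ) • Measure.dirac x₀ with hT
  have hx₀D : ‖x₀‖ ≤ D := by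
    have := hD hx₀
    rwa [mem_closedBall, dist_zero_right] at this
  have hx₀R : x₀ ∈ B := by
    rw [hBdef, mem_closedBall, dist_zero_right]
    linarith
  have hTprob : ∀ n, IsProbabilityMeasure (T n) := fun n => by
    haveI := (hρseq n).1
    exact transport_prob (ρseq n)
  have hTint : ∀ n, Integrable (fun x => ‖x‖^2) (T n) := fun n => by
    haveI := (hρseq n).1
    exact transport_sqint (ρseq n) (hρseq n).2
  have hTAdm : ∀ n, T n ∈ Adm := fun n => ⟨hTprob n, hTint n⟩
  have hTle : ∀ n, En M W ε (T n) ≤ En M W ε (ρseq n) := fun n => by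
    haveI := (hρseq n).1
    exact transport_En_le hWc hW0 hC hMne' hx₀ hD hε hS0 hRD hgap (ρseq n)
      (hρseq n).2 (hmom n)
  have hTcompl : ∀ n, T n Bᶜ = 0 := fun n => transport_compl_zero (ρseq n) hx₀R
  -- squeeze: the truncated sequence is also minimizing
  have hTlim : Tendsto (fun n => En M W ε (T n)) atTop (nhds m) := by
    have hup : ∀ n, En M W ε (T n) ≤ m + 1/((n:ℝ)+1) := fun n =>
      le_trans (hTle n) (hEρseq n).le
    have hlo : ∀ n, m ≤ En M W ε (T n) := fun n => hm_le _ (hTAdm n)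
    have h1 : Tendsto (fun n : ℕ => m + 1/((n:ℝ)+1)) atTop (nhds (m + 0)) :=
      tendsto_const_nhds.add tendsto_one_div_add_atTop_nhds_zero_nat
    rw [add_zero] at h1
    exact tendsto_of_tendsto_of_tendsto_of_le_of_le tendsto_const_nhds h1 hlo hup
  -- pass to the compact subtype
  haveI hXcompact : CompactSpace B := isCompact_iff_compactSpace.mp
    (by rw [hBdef]; exact isCompact_closedBall _ _)
  haveI hXne : Nonempty B := ⟨⟨x₀, hx₀R⟩⟩
  haveI hXborel : BorelSpace B := Subtype.borelSpace B
  have hemb : MeasurableEmbedding ((↑) : B → EuclideanSpace ℝ (Fin d)) :=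
    MeasurableEmbedding.subtype_coe hBm
  set ν : ℕ → Measure B := fun n => (T n).comap (↑) with hν
  have hmap : ∀ n, (ν n).map (↑) = T n := by
    intro n
    have h1 : (ν n).map (↑) = (T n).restrict (Set.range ((↑) : B → _)) := by
      simp only [hν]
      exact hemb.map_comap (T n)
    rw [h1, Subtype.range_coe]
    refine Measure.restrict_eq_self_of_ae_mem ?_
    rw [ae_iff]
    have : {x | ¬ x ∈ B} = Bᶜ := rfl
    rw [this]
    exact hTcompl n
  have hνprob : ∀ n, IsProbabilityMeasure (ν n) := by
    intro n
    haveI := hTprob n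
    constructor
    have h0 : (ν n) univ = (T n) B := by
      simp only [hν]
      rw [hemb.comap_apply, image_univ, Subtype.range_coe]
    rw [h0]
    have h1 : T n B + T n Bᶜ = T n univ := measure_add_measure_compl hBm
    rw [hTcompl n, add_zero, measure_univ] at h1
    exact h1
  obtain ⟨U, hU⟩ := Ultrafilter.exists_le (atTop : Filter ℕ)
  set μX := limMeas U ν hνprob with hμX
  haveI : IsProbabilityMeasure μX := limMeas_prob U ν hνprob
  -- integrands on the subtype
  set FX : B × B → ℝ :=
    fun p => W ((p.1 : EuclideanSpace ℝ (Fin d)) - (p.2 : EuclideanSpace ℝ (Fin d))) with hFX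
  have hFXc : Continuous FX := hWc.comp
    ((continuous_subtype_val.comp continuous_fst).sub
      (continuous_subtype_val.comp continuous_snd))
  set VX : B → ℝ := fun x => infDist (x : EuclideanSpace ℝ (Fin d)) M ^ 2 with hVX
  have hVXc : Continuous VX := V_cont.comp continuous_subtype_val
  have htd : Tendsto (fun n => ∫ x, ∫ y, FX (x,y) ∂(ν n) ∂(ν n)) U
      (nhds (∫ x, ∫ y, FX (x,y) ∂μX ∂μX)) :=
    tendsto_double_integral_limMeas U ν hνprob hFXc
  have htV : Tendsto (fun n => ∫ x, VX x ∂(ν n)) U (nhds (∫ x, VX x ∂μX)) :=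
    tendsto_integral_limMeas U ν hνprob hVXc
  -- transfer of the energy through the embedding
  have htransfer : ∀ κ : Measure B, IsProbabilityMeasure κ →
      En M W ε (κ.map (↑))
        = (1/2) * ∫ x, ∫ y, FX (x,y) ∂κ ∂κ + (1/ε) * ∫ x, VX x ∂κ := by
    intro κ hκ
    haveI := hκ
    haveI : IsProbabilityMeasure (κ.map ((↑) : B → EuclideanSpace ℝ (Fin d))) :=
      Measure.isProbabilityMeasure_map measurable_subtype_coe.aemeasurable
    have hVeq : ∫ x, infDist x M ^ 2 ∂(κ.map (↑)) = ∫ x, VX x ∂κ :=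
      integral_map measurable_subtype_coe.aemeasurable V_cont.aestronglyMeasurable
    have hsm : StronglyMeasurable
        (fun x => ∫ y, W (x - y) ∂(κ.map ((↑) : B → EuclideanSpace ℝ (Fin d)))) :=
      sm_W_inner hWc _
    have hJ : ∫ x, ∫ y, W (x - y) ∂(κ.map (↑)) ∂(κ.map (↑))
        = ∫ x, ∫ y, FX (x,y) ∂κ ∂κ := by
      rw [integral_map measurable_subtype_coe.aemeasurable hsm.aestronglyMeasurable]
      refine integral_congr_ae (Filter.Eventually.of_forall fun x => ?_)
      exact integral_map measurable_subtype_coe.aemeasurable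
        ((hWc.comp (continuous_const.sub continuous_id)).aestronglyMeasurable)
    simp only [En]
    rw [hVeq, hJ]
  have hEnν : ∀ n, En M W ε (T n)
      = (1/2) * ∫ x, ∫ y, FX (x,y) ∂(ν n) ∂(ν n) + (1/ε) * ∫ x, VX x ∂(ν n) := by
    intro n
    rw [← hmap n]
    exact htransfer (ν n) (hνprob n)
  have hXlim : Tendsto (fun n => (1/2) * ∫ x, ∫ y, FX (x,y) ∂(ν n) ∂(ν n)
        + (1/ε) * ∫ x, VX x ∂(ν n)) U
      (nhds ((1/2) * ∫ x, ∫ y, FX (x,y) ∂μX ∂μX + (1/ε) * ∫ x, VX x ∂μX)) :=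
    (htd.const_mul _).add (htV.const_mul _)
  have hmlim : Tendsto (fun n => En M W ε (T n)) U (nhds m) := hTlim.mono_left hU
  have hEnμX : (1/2) * ∫ x, ∫ y, FX (x,y) ∂μX ∂μX + (1/ε) * ∫ x, VX x ∂μX = m := by
    refine tendsto_nhds_unique ?_ hmlim
    have heq : (fun n => (1/2) * ∫ x, ∫ y, FX (x,y) ∂(ν n) ∂(ν n)
        + (1/ε) * ∫ x, VX x ∂(ν n)) = fun n => En M W ε (T n) :=
      funext fun n => (hEnν n).symm
    rw [← heq]
    exact hXlim
  -- conclusion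
  refine ⟨μX.map (↑), Measure.isProbabilityMeasure_map measurable_subtype_coe.aemeasurable, ?_, ?_⟩
  · rw [integrable_map_measure hnormsq_cont.aestronglyMeasurable
      measurable_subtype_coe.aemeasurable]
    exact integrable_of_cont μX (hnormsq_cont.comp continuous_subtype_val)
  · intro ρ hρp hρ2
    have hfinal : En M W ε (μX.map (↑)) = m := by
      rw [htransfer μX inferInstance, hEnμX]
    have hge := hm_le ρ ⟨hρp, hρ2⟩
    show En M W ε (μX.map (↑)) ≤ En M W ε ρ
    rw [hfinal]
    exact hge
end
end

section
/- With notation as above (supp ρ_ε ⊂ M_r, γ = (π₁, ζ)#θ, ζ(x,p,q) = x+q−p), the penalty term does not increase under the transport: ∬ (d_M(x)² − d_M(y)²) dγ(x,y) ≥ 0. In particular E_ε(ρ_ε) − E_ε(μ) ≥ (1/2)∬∬ (W(x−u) − W(y−v)) dγ(u,v) dγ(x,y). -/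
open Metric MeasureTheory

noncomputable section

/-- With supp ρ_ε ⊂ M_r, γ = (π₁, ζ)#θ, ζ(x,p,q) = x+q−p, the penalty term does not increase
under the transport: ∬ (d_M(x)² − d_M(y)²) dγ(x,y) ≥ 0. In particular
E_ε(ρ_ε) − E_ε(μ) ≥ (1/2)∬∬ (W(x−u) − W(y−v)) dγ(u,v) dγ(x,y). -/
theorem stmt10 {d : ℕ} (M : Set (EuclideanSpace ℝ (Fin d))) (hMne : M.Nonempty)
    (hMc : IsCompact M) (η r : ℝ) (hη : 0 < η) (hr : 0 < r) (hrη : r < η)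
    (hreach : ∀ y : EuclideanSpace ℝ (Fin d), infDist y M < η →
      ∃! p, p ∈ M ∧ dist y p = infDist y M)
    (W : EuclideanSpace ℝ (Fin d) → ℝ) (hWc : Continuous W)
    (proj : EuclideanSpace ℝ (Fin d) → EuclideanSpace ℝ (Fin d)) (hprojm : Measurable proj)
    (hproj : ∀ x, infDist x M < r → proj x ∈ M ∧ dist x (proj x) = infDist x M)
    (ρ ν : Measure (EuclideanSpace ℝ (Fin d)))
    (hρ : IsProbabilityMeasure ρ) (hν : IsProbabilityMeasure ν)
    (hρsupp : ρ {x | infDist x M < r}ᶜ = 0) (hνsupp : ν Mᶜ = 0)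
    (θ : Measure (EuclideanSpace ℝ (Fin d) × EuclideanSpace ℝ (Fin d) × EuclideanSpace ℝ (Fin d)))
    (hθ : IsProbabilityMeasure θ)
    (hθsupp : θ ({x | infDist x M < r} ×ˢ M ×ˢ M)ᶜ = 0)
    (hθ12 : θ.map (fun z => (z.1, z.2.1)) = ρ.map (fun x => (x, proj x)))
    (hθ23marg : (θ.map (fun z => z.2)).map Prod.fst = ρ.map proj ∧
      (θ.map (fun z => z.2)).map Prod.snd = ν)
    (γ : Measure (EuclideanSpace ℝ (Fin d) × EuclideanSpace ℝ (Fin d)))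
    (hγ : γ = θ.map (fun z => (z.1, z.1 + z.2.2 - z.2.1)))
    (μ : Measure (EuclideanSpace ℝ (Fin d)))
    (hμ : μ = γ.map Prod.snd)
    (ε : ℝ) (hε : 0 < ε) :
    (0 ≤ ∫ xy, (infDist xy.1 M ^ 2 - infDist xy.2 M ^ 2) ∂γ) ∧
    ((1 / 2) * ∫ x, ∫ y, W (x - y) ∂ρ ∂ρ + (1 / ε) * ∫ x, infDist x M ^ 2 ∂ρ)
        - ((1 / 2) * ∫ x, ∫ y, W (x - y) ∂μ ∂μ + (1 / ε) * ∫ x, infDist x M ^ 2 ∂μ)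
      ≥ (1 / 2) * ∫ xy, ∫ uv, (W (xy.1 - uv.1) - W (xy.2 - uv.2)) ∂γ ∂γ := by
  classical
  have hMclosed : IsClosed M := hMc.isClosed
  obtain ⟨R, hR0, hMR⟩ := hMc.isBounded.subset_closedBall_lt 0 0
  set B : ℝ := 3 * R + r with hB
  have hB0 : 0 < B := by positivity
  have hζm : Measurable (fun z : (EuclideanSpace ℝ (Fin d)) ×
      (EuclideanSpace ℝ (Fin d)) × (EuclideanSpace ℝ (Fin d)) =>
      (z.1, z.1 + z.2.2 - z.2.1)) := by fun_prop
  have hm12 : Measurable (fun z : (EuclideanSpace ℝ (Fin d)) ×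
      (EuclideanSpace ℝ (Fin d)) × (EuclideanSpace ℝ (Fin d)) => (z.1, z.2.1)) := by fun_prop
  have hg : Measurable (fun x : EuclideanSpace ℝ (Fin d) => (x, proj x)) := by fun_prop
  -- a.e. support of θ
  have hθae : ∀ᵐ z ∂θ, infDist z.1 M < r ∧ z.2.1 ∈ M ∧ z.2.2 ∈ M := by
    have : ∀ᵐ z ∂θ, z ∈ ({x | infDist x M < r} ×ˢ M ×ˢ M :
        Set ((EuclideanSpace ℝ (Fin d)) × (EuclideanSpace ℝ (Fin d)) × (EuclideanSpace ℝ (Fin d)))) := by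
      rw [ae_iff]
      convert hθsupp using 2
      rfl
    filter_upwards [this] with z hz
    simpa [Set.mem_prod] using hz
  -- a.e. z.2.1 = proj z.1
  have hGmeas : MeasurableSet {w : (EuclideanSpace ℝ (Fin d)) × (EuclideanSpace ℝ (Fin d)) |
      w.2 = proj w.1} := by
    have hm : Measurable fun w : (EuclideanSpace ℝ (Fin d)) × (EuclideanSpace ℝ (Fin d)) =>
        w.2 - proj w.1 := by fun_prop
    have h2 := hm (measurableSet_singleton (0 : EuclideanSpace ℝ (Fin d)))
    convert h2 using 1
    ext w
    simp [sub_eq_zero]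
  have hpae : ∀ᵐ z ∂θ, z.2.1 = proj z.1 := by
    have key : θ ((fun z : (EuclideanSpace ℝ (Fin d)) ×
        (EuclideanSpace ℝ (Fin d)) × (EuclideanSpace ℝ (Fin d)) => (z.1, z.2.1)) ⁻¹'
        {w : (EuclideanSpace ℝ (Fin d)) × (EuclideanSpace ℝ (Fin d)) | w.2 = proj w.1}ᶜ) = 0 := by
      rw [← Measure.map_apply hm12 hGmeas.compl, hθ12, Measure.map_apply hg hGmeas.compl]
      have he : ((fun x : EuclideanSpace ℝ (Fin d) => (x, proj x)) ⁻¹'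
          {w : (EuclideanSpace ℝ (Fin d)) × (EuclideanSpace ℝ (Fin d)) | w.2 = proj w.1}ᶜ) = ∅ := by
        ext x
        simp
      rw [he, measure_empty]
    rw [ae_iff]
    have hset : {z : (EuclideanSpace ℝ (Fin d)) ×
        (EuclideanSpace ℝ (Fin d)) × (EuclideanSpace ℝ (Fin d)) | ¬ z.2.1 = proj z.1}
        = (fun z : (EuclideanSpace ℝ (Fin d)) ×
        (EuclideanSpace ℝ (Fin d)) × (EuclideanSpace ℝ (Fin d)) => (z.1, z.2.1)) ⁻¹'
        {w : (EuclideanSpace ℝ (Fin d)) × (EuclideanSpace ℝ (Fin d)) | w.2 = proj w.1}ᶜ := by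
      ext z
      simp [Set.mem_preimage]
    rw [hset]
    exact key
  -- a.e. properties of γ
  have hPmeas : MeasurableSet {xy : (EuclideanSpace ℝ (Fin d)) × (EuclideanSpace ℝ (Fin d)) |
      infDist xy.2 M ≤ infDist xy.1 M ∧ infDist xy.1 M < r ∧ ‖xy.1‖ ≤ B ∧ ‖xy.2‖ ≤ B} := by
    simp only [Set.setOf_and]
    refine MeasurableSet.inter ?_ (MeasurableSet.inter ?_ (MeasurableSet.inter ?_ ?_))
    · exact measurableSet_le ((continuous_infDist_pt M).comp continuous_snd).measurable
        ((continuous_infDist_pt M).comp continuous_fst).measurable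
    · exact measurableSet_lt ((continuous_infDist_pt M).comp continuous_fst).measurable
        measurable_const
    · exact measurableSet_le (continuous_fst.norm).measurable measurable_const
    · exact measurableSet_le (continuous_snd.norm).measurable measurable_const
  have hγae : ∀ᵐ xy ∂γ, infDist xy.2 M ≤ infDist xy.1 M ∧ infDist xy.1 M < r ∧
      ‖xy.1‖ ≤ B ∧ ‖xy.2‖ ≤ B := by
    rw [hγ, ae_map_iff hζm.aemeasurable hPmeas]
    filter_upwards [hθae, hpae] with z hz hp
    obtain ⟨hz1, hp1, hq1⟩ := hz
    have hdxp : dist z.1 z.2.1 = infDist z.1 M := by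
      rw [hp]; exact (hproj z.1 hz1).2
    have hy_le : infDist (z.1 + z.2.2 - z.2.1) M ≤ infDist z.1 M := by
      calc infDist (z.1 + z.2.2 - z.2.1) M ≤ dist (z.1 + z.2.2 - z.2.1) z.2.2 :=
            infDist_le_dist_of_mem hq1
        _ = dist z.1 z.2.1 := by
            rw [dist_eq_norm, dist_eq_norm]; congr 1; abel
        _ = infDist z.1 M := hdxp
    have hnp : ‖z.2.1‖ ≤ R := mem_closedBall_zero_iff.1 (hMR hp1)
    have hnq : ‖z.2.2‖ ≤ R := mem_closedBall_zero_iff.1 (hMR hq1)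
    have h2 : ‖z.1 - z.2.1‖ = infDist z.1 M := by rw [← dist_eq_norm]; exact hdxp
    have hnx : ‖z.1‖ ≤ B := by
      have h1 : ‖z.1‖ ≤ ‖z.1 - z.2.1‖ + ‖z.2.1‖ := by
        calc ‖z.1‖ = ‖z.1 - z.2.1 + z.2.1‖ := by congr 1; abel
          _ ≤ ‖z.1 - z.2.1‖ + ‖z.2.1‖ := norm_add_le _ _
      simp only [hB]
      linarith
    have hny : ‖z.1 + z.2.2 - z.2.1‖ ≤ B := by
      have h1 : ‖z.1 + z.2.2 - z.2.1‖ ≤ ‖z.1 - z.2.1‖ + ‖z.2.2‖ := by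
        calc ‖z.1 + z.2.2 - z.2.1‖ = ‖z.1 - z.2.1 + z.2.2‖ := by congr 1; abel
          _ ≤ ‖z.1 - z.2.1‖ + ‖z.2.2‖ := norm_add_le _ _
      simp only [hB]
      linarith
    exact ⟨hy_le, hz1, hnx, hny⟩
  -- probability instances
  haveI hγprob : IsProbabilityMeasure γ := by
    rw [hγ]; exact Measure.isProbabilityMeasure_map hζm.aemeasurable
  haveI hμprob : IsProbabilityMeasure μ := by
    rw [hμ]; exact Measure.isProbabilityMeasure_map measurable_snd.aemeasurable
  -- marginals
  have hfst : γ.map Prod.fst = ρ := by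
    rw [hγ, Measure.map_map measurable_fst hζm]
    have h1 : (Prod.fst ∘ fun z : (EuclideanSpace ℝ (Fin d)) ×
        (EuclideanSpace ℝ (Fin d)) × (EuclideanSpace ℝ (Fin d)) =>
        (z.1, z.1 + z.2.2 - z.2.1)) = Prod.fst ∘ fun z => (z.1, z.2.1) := rfl
    rw [h1, ← Measure.map_map measurable_fst hm12, hθ12, Measure.map_map measurable_fst hg]
    have h2 : (Prod.fst ∘ fun x : EuclideanSpace ℝ (Fin d) => (x, proj x)) = id := rfl
    rw [h2, Measure.map_id]
  -- transfer lemmas for marginal integrals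
  have tfst : ∀ f : EuclideanSpace ℝ (Fin d) → ℝ, AEStronglyMeasurable f ρ →
      ∫ xy : (EuclideanSpace ℝ (Fin d)) × (EuclideanSpace ℝ (Fin d)), f xy.1 ∂γ
        = ∫ x, f x ∂ρ := by
    intro f hf
    have hf' : AEStronglyMeasurable f (γ.map Prod.fst) := by rwa [hfst]
    have h := integral_map (μ := γ) measurable_fst.aemeasurable hf'
    rw [hfst] at h
    exact h.symm
  have tsnd : ∀ f : EuclideanSpace ℝ (Fin d) → ℝ, AEStronglyMeasurable f μ →
      ∫ xy : (EuclideanSpace ℝ (Fin d)) × (EuclideanSpace ℝ (Fin d)), f xy.2 ∂γ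
        = ∫ x, f x ∂μ := by
    intro f hf
    have hf' : AEStronglyMeasurable f (γ.map Prod.snd) := by rwa [← hμ]
    have h := integral_map (μ := γ) measurable_snd.aemeasurable hf'
    rw [← hμ] at h
    exact h.symm
  -- integrability of penalty integrands
  have hd1int : Integrable (fun xy : (EuclideanSpace ℝ (Fin d)) ×
      (EuclideanSpace ℝ (Fin d)) => infDist xy.1 M ^ 2) γ := by
    refine (integrable_const (r ^ 2)).mono'
      (((continuous_infDist_pt M).comp continuous_fst).pow 2).aestronglyMeasurable ?_
    filter_upwards [hγae] with xy hxy
    rw [Real.norm_eq_abs, abs_of_nonneg (by positivity)]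
    nlinarith [infDist_nonneg (x := xy.1) (s := M), hxy.2.1]
  have hd2int : Integrable (fun xy : (EuclideanSpace ℝ (Fin d)) ×
      (EuclideanSpace ℝ (Fin d)) => infDist xy.2 M ^ 2) γ := by
    refine (integrable_const (r ^ 2)).mono'
      (((continuous_infDist_pt M).comp continuous_snd).pow 2).aestronglyMeasurable ?_
    filter_upwards [hγae] with xy hxy
    rw [Real.norm_eq_abs, abs_of_nonneg (by positivity)]
    nlinarith [infDist_nonneg (x := xy.2) (s := M), infDist_nonneg (x := xy.1) (s := M),
      hxy.1, hxy.2.1]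
  -- part 1
  have hpen : 0 ≤ ∫ xy, (infDist xy.1 M ^ 2 - infDist xy.2 M ^ 2) ∂γ := by
    refine integral_nonneg_of_ae ?_
    filter_upwards [hγae] with xy hxy
    have h0 : (0 : ℝ) ≤ infDist xy.2 M := infDist_nonneg
    simp only [Pi.zero_apply]
    nlinarith [hxy.1]
  -- penalty equality
  have e1 : ∫ xy : (EuclideanSpace ℝ (Fin d)) × (EuclideanSpace ℝ (Fin d)),
      infDist xy.1 M ^ 2 ∂γ = ∫ x, infDist x M ^ 2 ∂ρ :=
    tfst (fun x => infDist x M ^ 2) ((continuous_infDist_pt M).pow 2).aestronglyMeasurable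
  have e2 : ∫ xy : (EuclideanSpace ℝ (Fin d)) × (EuclideanSpace ℝ (Fin d)),
      infDist xy.2 M ^ 2 ∂γ = ∫ x, infDist x M ^ 2 ∂μ :=
    tsnd (fun x => infDist x M ^ 2) ((continuous_infDist_pt M).pow 2).aestronglyMeasurable
  have hpeneq : (∫ x, infDist x M ^ 2 ∂ρ) - (∫ x, infDist x M ^ 2 ∂μ)
      = ∫ xy, (infDist xy.1 M ^ 2 - infDist xy.2 M ^ 2) ∂γ := by
    rw [integral_sub hd1int hd2int, e1, e2]
  -- bound for W
  obtain ⟨C, hC⟩ := (isCompact_closedBall (0 : EuclideanSpace ℝ (Fin d))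
    (2 * B)).exists_bound_of_continuousOn hWc.continuousOn
  have hWB : ∀ a b : EuclideanSpace ℝ (Fin d), ‖a‖ ≤ B → ‖b‖ ≤ B → ‖W (a - b)‖ ≤ C := by
    intro a b ha hb
    apply hC
    rw [mem_closedBall_zero_iff]
    calc ‖a - b‖ ≤ ‖a‖ + ‖b‖ := norm_sub_le _ _
      _ ≤ 2 * B := by linarith
  -- ρ and μ a.e. bounds
  have hρB : ∀ᵐ u ∂ρ, ‖u‖ ≤ B := by
    have hρae : ∀ᵐ u ∂ρ, infDist u M < r := by
      rw [ae_iff]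
      have hs : {a : EuclideanSpace ℝ (Fin d) | ¬ infDist a M < r}
          = {x : EuclideanSpace ℝ (Fin d) | infDist x M < r}ᶜ := by
        ext u
        simp
      rw [hs]
      exact hρsupp
    filter_upwards [hρae] with u hu
    obtain ⟨hpm, hpd⟩ := hproj u hu
    have hnp : ‖proj u‖ ≤ R := mem_closedBall_zero_iff.1 (hMR hpm)
    have h1 : ‖u‖ ≤ ‖u - proj u‖ + ‖proj u‖ := by
      calc ‖u‖ = ‖u - proj u + proj u‖ := by congr 1; abel
        _ ≤ ‖u - proj u‖ + ‖proj u‖ := norm_add_le _ _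
    have h2 : ‖u - proj u‖ = infDist u M := by rw [← dist_eq_norm]; exact hpd
    simp only [hB]
    linarith
  have hμB : ∀ᵐ v ∂μ, ‖v‖ ≤ B := by
    rw [hμ, ae_map_iff measurable_snd.aemeasurable
      ((isClosed_le continuous_norm continuous_const).measurableSet)]
    filter_upwards [hγae] with xy hxy
    exact hxy.2.2.2
  have hγB : ∀ᵐ xy ∂γ, ‖xy.1‖ ≤ B ∧ ‖xy.2‖ ≤ B := by
    filter_upwards [hγae] with xy hxy
    exact hxy.2.2
  -- inner integrability
  have hinner1 : ∀ x : EuclideanSpace ℝ (Fin d),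
      Integrable (fun uv : (EuclideanSpace ℝ (Fin d)) × (EuclideanSpace ℝ (Fin d)) =>
        W (x - uv.1)) γ := by
    intro x
    obtain ⟨Cx, hCx⟩ := (isCompact_closedBall (0 : EuclideanSpace ℝ (Fin d))
      B).exists_bound_of_continuousOn
      ((hWc.comp (continuous_const.sub continuous_id)).continuousOn)
    refine (integrable_const Cx).mono'
      ((hWc.comp (continuous_const.sub continuous_fst)).aestronglyMeasurable) ?_
    filter_upwards [hγB] with uv huv
    exact hCx uv.1 (mem_closedBall_zero_iff.2 huv.1)
  have hinner2 : ∀ x : EuclideanSpace ℝ (Fin d),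
      Integrable (fun uv : (EuclideanSpace ℝ (Fin d)) × (EuclideanSpace ℝ (Fin d)) =>
        W (x - uv.2)) γ := by
    intro x
    obtain ⟨Cx, hCx⟩ := (isCompact_closedBall (0 : EuclideanSpace ℝ (Fin d))
      B).exists_bound_of_continuousOn
      ((hWc.comp (continuous_const.sub continuous_id)).continuousOn)
    refine (integrable_const Cx).mono'
      ((hWc.comp (continuous_const.sub continuous_snd)).aestronglyMeasurable) ?_
    filter_upwards [hγB] with uv huv
    exact hCx uv.2 (mem_closedBall_zero_iff.2 huv.2)
  -- inner equality
  have hinnereq : ∀ xy : (EuclideanSpace ℝ (Fin d)) × (EuclideanSpace ℝ (Fin d)),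
      (∫ uv, (W (xy.1 - uv.1) - W (xy.2 - uv.2)) ∂γ)
        = (∫ u, W (xy.1 - u) ∂ρ) - (∫ v, W (xy.2 - v) ∂μ) := by
    intro xy
    have f1 : ∫ uv : (EuclideanSpace ℝ (Fin d)) × (EuclideanSpace ℝ (Fin d)),
        W (xy.1 - uv.1) ∂γ = ∫ u, W (xy.1 - u) ∂ρ :=
      tfst (fun u => W (xy.1 - u))
        ((hWc.comp (continuous_const.sub continuous_id)).aestronglyMeasurable)
    have f2 : ∫ uv : (EuclideanSpace ℝ (Fin d)) × (EuclideanSpace ℝ (Fin d)),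
        W (xy.2 - uv.2) ∂γ = ∫ v, W (xy.2 - v) ∂μ :=
      tsnd (fun v => W (xy.2 - v))
        ((hWc.comp (continuous_const.sub continuous_id)).aestronglyMeasurable)
    rw [integral_sub (hinner1 xy.1) (hinner2 xy.2), f1, f2]
  -- strong measurability of the parametrized integrals
  have hsm1 : StronglyMeasurable (fun x : EuclideanSpace ℝ (Fin d) => ∫ u, W (x - u) ∂ρ) :=
    (hWc.comp (continuous_fst.sub continuous_snd)).stronglyMeasurable.integral_prod_right'
  have hsm2 : StronglyMeasurable (fun x : EuclideanSpace ℝ (Fin d) => ∫ v, W (x - v) ∂μ) :=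
    (hWc.comp (continuous_fst.sub continuous_snd)).stronglyMeasurable.integral_prod_right'
  -- outer integrability
  have houter1 : Integrable (fun xy : (EuclideanSpace ℝ (Fin d)) ×
      (EuclideanSpace ℝ (Fin d)) => ∫ u, W (xy.1 - u) ∂ρ) γ := by
    refine (integrable_const C).mono'
      ((hsm1.comp_measurable measurable_fst).aestronglyMeasurable) ?_
    filter_upwards [hγB] with xy hxy
    calc ‖∫ u, W (xy.1 - u) ∂ρ‖ ≤ ∫ u, C ∂ρ := by
          apply norm_integral_le_of_norm_le (integrable_const C)
          filter_upwards [hρB] with u hu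
          exact hWB xy.1 u hxy.1 hu
      _ = C := by simp
  have houter2 : Integrable (fun xy : (EuclideanSpace ℝ (Fin d)) ×
      (EuclideanSpace ℝ (Fin d)) => ∫ v, W (xy.2 - v) ∂μ) γ := by
    refine (integrable_const C).mono'
      ((hsm2.comp_measurable measurable_snd).aestronglyMeasurable) ?_
    filter_upwards [hγB] with xy hxy
    calc ‖∫ v, W (xy.2 - v) ∂μ‖ ≤ ∫ v, C ∂μ := by
          apply norm_integral_le_of_norm_le (integrable_const C)
          filter_upwards [hμB] with v hv
          exact hWB xy.2 v hxy.2 hv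
      _ = C := by simp
  -- outer equality
  have E1 : ∫ xy : (EuclideanSpace ℝ (Fin d)) × (EuclideanSpace ℝ (Fin d)),
      (∫ u, W (xy.1 - u) ∂ρ) ∂γ = ∫ x, ∫ y, W (x - y) ∂ρ ∂ρ :=
    tfst (fun x => ∫ u, W (x - u) ∂ρ) hsm1.aestronglyMeasurable
  have E2 : ∫ xy : (EuclideanSpace ℝ (Fin d)) × (EuclideanSpace ℝ (Fin d)),
      (∫ v, W (xy.2 - v) ∂μ) ∂γ = ∫ x, ∫ y, W (x - y) ∂μ ∂μ :=
    tsnd (fun x => ∫ v, W (x - v) ∂μ) hsm2.aestronglyMeasurable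
  have houteq : (∫ xy, ∫ uv, (W (xy.1 - uv.1) - W (xy.2 - uv.2)) ∂γ ∂γ)
      = (∫ x, ∫ y, W (x - y) ∂ρ ∂ρ) - (∫ x, ∫ y, W (x - y) ∂μ ∂μ) := by
    simp_rw [hinnereq]
    rw [integral_sub houter1 houter2, E1, E2]
  refine ⟨hpen, ?_⟩
  rw [ge_iff_le, houteq]
  have hinv : (0 : ℝ) ≤ 1 / ε := by positivity
  have hkey : 0 ≤ (1 / ε) * ((∫ x, infDist x M ^ 2 ∂ρ) - (∫ x, infDist x M ^ 2 ∂μ)) := by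
    rw [hpeneq]
    exact mul_nonneg hinv hpen
  nlinarith [hkey]

end
end
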